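/- arXiv:math/0611661 — 8 statements merged into one kernel-verified Lean document; each statement's English description precedes it below -/
import Mathlib

section
/- Let V be a valuation domain with maximal ideal M. If M is not divisorial (i.e., (V : (V : M)) ≠ M), then a nonzero ideal I of V is nondivisorial if and only if I = xM for some element x of V. -/
open scoped nonZeroDivisors

noncomputable section

variable (R : Type*) [CommRing R] [IsDomain R]

abbrev LocAt (M : Ideal R) (hM : M.IsPrime) : Type _ :=
  Localization (@Ideal.primeCompl R _ M hM)

def MapAt (M : Ideal R) (hM : M.IsPrime) (I : Ideal R) : Ideal (LocAt R M hM) :=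
  I.map (algebraMap R (LocAt R M hM))

def divClos (I : Ideal R) : FractionalIdeal R⁰ (FractionRing R) :=
  1 / (1 / (I : FractionalIdeal R⁰ (FractionRing R)))

def Divisorial (I : Ideal R) : Prop :=
  divClos R I = (I : FractionalIdeal R⁰ (FractionRing R))

def DivisorialLoc (M : Ideal R) (hM : M.IsPrime) (A : Ideal (LocAt R M hM)) : Prop :=
  haveI : IsDomain (LocAt R M hM) :=
    IsLocalization.isDomain_localization (@Ideal.primeCompl_le_nonZeroDivisors R _ _ M hM)
  Divisorial (LocAt R M hM) A

def DivisorialAt (M : Ideal R) (hM : M.IsPrime) (I : Ideal R) : Prop :=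
  DivisorialLoc R M hM (MapAt R M hM I)

def IsPruferDomain : Prop :=
  ∀ I : Ideal R, I ≠ ⊥ → I.FG → IsUnit (I : FractionalIdeal R⁰ (FractionRing R))

def FiniteCharacter : Prop :=
  ∀ x : R, x ≠ 0 → {M : Ideal R | M.IsMaximal ∧ x ∈ M}.Finite

def HLocal : Prop :=
  FiniteCharacter R ∧
    ∀ P : Ideal R, P.IsPrime → P ≠ ⊥ → ∃! M : Ideal R, M.IsMaximal ∧ P ≤ M

def WeakFactorization : Prop :=
  ∀ I : Ideal R, I ≠ ⊥ → ∃ l : Multiset (Ideal R), (∀ M ∈ l, M.IsMaximal) ∧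
    (I : FractionalIdeal R⁰ (FractionRing R)) =
      divClos R I * (l.map (fun M => (M : FractionalIdeal R⁰ (FractionRing R)))).prod

def MSet (I : Ideal R) : Set (Ideal R) :=
  {M | ∃ h : M.IsMaximal, I ≤ M ∧ ¬ Divisorial R M ∧ ¬ DivisorialAt R M h.isPrime I}

def StrongFactorization : Prop :=
  letI := Classical.decEq (Ideal R)
  ∀ I : Ideal R, I ≠ ⊥ → ∃ S : Finset (Ideal R), ↑S = MSet R I ∧
    (I : FractionalIdeal R⁰ (FractionRing R)) =
      divClos R I * ∏ M ∈ S, (M : FractionalIdeal R⁰ (FractionRing R)) ∧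
    ∀ M ∈ S, (I : FractionalIdeal R⁰ (FractionRing R)) ≠
      divClos R I * ∏ N ∈ S.erase M, (N : FractionalIdeal R⁰ (FractionRing R))

def AlmostDedekind : Prop :=
  ∀ (M : Ideal R) (hM : M.IsMaximal),
    haveI : IsDomain (LocAt R M hM.isPrime) :=
      IsLocalization.isDomain_localization
        (@Ideal.primeCompl_le_nonZeroDivisors R _ _ M hM.isPrime)
    IsDiscreteValuationRing (LocAt R M hM.isPrime)

def vIdeal (I : Ideal R) : Ideal R :=
  Submodule.comap (Algebra.linearMap R (FractionRing R))
    (divClos R I : Submodule R (FractionRing R))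

def traceIdeal (I : Ideal R) : Ideal R :=
  Submodule.comap (Algebra.linearMap R (FractionRing R))
    (((I : FractionalIdeal R⁰ (FractionRing R)) *
        (1 / (I : FractionalIdeal R⁰ (FractionRing R))) :
      FractionalIdeal R⁰ (FractionRing R)) : Submodule R (FractionRing R))
section Aux
variable {R : Type*} [CommRing R] [IsDomain R]

lemma oneLeOneDiv (I : Ideal R) (hI : I ≠ ⊥) :
    (1 : FractionalIdeal R⁰ (FractionRing R)) ≤ 1 / (I : FractionalIdeal R⁰ (FractionRing R)) := by
  rw [FractionalIdeal.le_div_iff_mul_le (by simpa using hI), one_mul]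
  exact FractionalIdeal.coeIdeal_le_one

lemma one_div_ne_zero' (I : Ideal R) (hI : I ≠ ⊥) :
    (1 / (I : FractionalIdeal R⁰ (FractionRing R))) ≠ 0 := fun h => by
  have h1 := oneLeOneDiv I hI
  rw [h] at h1
  exact one_ne_zero (le_antisymm h1 (FractionalIdeal.zero_le _))

lemma divClos_le_one (I : Ideal R) (hI : I ≠ ⊥) : divClos R I ≤ 1 := by
  intro x hx
  have hx' : x ∈ divClos R I := hx
  rw [divClos, FractionalIdeal.mem_div_iff_of_ne_zero (one_div_ne_zero' I hI)] at hx'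
  have h2 := hx' 1 (oneLeOneDiv I hI (FractionalIdeal.one_mem_one _))
  show x ∈ ((1 : FractionalIdeal R⁰ (FractionRing R)) : Submodule R (FractionRing R))
  rw [FractionalIdeal.mem_coe]
  simpa using h2

lemma le_divClos (I : Ideal R) (hI : I ≠ ⊥) :
    (I : FractionalIdeal R⁰ (FractionRing R)) ≤ divClos R I := by
  rw [divClos, FractionalIdeal.le_div_iff_mul_le (one_div_ne_zero' I hI), mul_comm]
  rw [← FractionalIdeal.le_div_iff_mul_le (by simpa using hI)]

lemma nondiv_ne_bot {I : Ideal R} (h : ¬ Divisorial R I) : I ≠ ⊥ := fun hb => by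
  apply h
  rw [Divisorial, divClos, hb]
  simp

lemma one_div_mul_self_le_one {J : FractionalIdeal R⁰ (FractionRing R)} (hJ : J ≠ 0) :
    (1 / J) * J ≤ 1 :=
  (FractionalIdeal.le_div_iff_mul_le hJ).mp le_rfl

lemma one_div_spanSingleton_mul {d : FractionRing R} (hd : d ≠ 0)
    {J : FractionalIdeal R⁰ (FractionRing R)} (hJ : J ≠ 0) :
    1 / (FractionalIdeal.spanSingleton R⁰ d * J) =
      FractionalIdeal.spanSingleton R⁰ d⁻¹ * (1 / J) := by
  have hcancel : FractionalIdeal.spanSingleton R⁰ d⁻¹ * FractionalIdeal.spanSingleton R⁰ d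
      = 1 := by
    rw [FractionalIdeal.spanSingleton_mul_spanSingleton, inv_mul_cancel₀ hd,
      FractionalIdeal.spanSingleton_one]
  have hsJ : FractionalIdeal.spanSingleton R⁰ d * J ≠ 0 := fun h => hJ (by
    calc J = (FractionalIdeal.spanSingleton R⁰ d⁻¹ * FractionalIdeal.spanSingleton R⁰ d) * J := by
          rw [hcancel, one_mul]
      _ = FractionalIdeal.spanSingleton R⁰ d⁻¹ * (FractionalIdeal.spanSingleton R⁰ d * J) :=
          mul_assoc _ _ _
      _ = 0 := by rw [h, mul_zero])
  refine le_antisymm ?_ ?_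
  · -- ≤ direction
    have key : FractionalIdeal.spanSingleton R⁰ d *
        (1 / (FractionalIdeal.spanSingleton R⁰ d * J)) ≤ 1 / J := by
      rw [FractionalIdeal.le_div_iff_mul_le hJ]
      calc FractionalIdeal.spanSingleton R⁰ d *
            (1 / (FractionalIdeal.spanSingleton R⁰ d * J)) * J
          = (1 / (FractionalIdeal.spanSingleton R⁰ d * J)) *
            (FractionalIdeal.spanSingleton R⁰ d * J) := by ring
        _ ≤ 1 := one_div_mul_self_le_one hsJ
    calc 1 / (FractionalIdeal.spanSingleton R⁰ d * J)
        = FractionalIdeal.spanSingleton R⁰ d⁻¹ * (FractionalIdeal.spanSingleton R⁰ d *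
            (1 / (FractionalIdeal.spanSingleton R⁰ d * J))) := by
          rw [← mul_assoc, hcancel, one_mul]
      _ ≤ FractionalIdeal.spanSingleton R⁰ d⁻¹ * (1 / J) :=
          FractionalIdeal.mul_le.mpr fun i hi j hj =>
            FractionalIdeal.mul_mem_mul hi (key hj)
  · rw [FractionalIdeal.le_div_iff_mul_le hsJ]
    calc FractionalIdeal.spanSingleton R⁰ d⁻¹ * (1 / J) *
          (FractionalIdeal.spanSingleton R⁰ d * J)
        = (FractionalIdeal.spanSingleton R⁰ d⁻¹ * FractionalIdeal.spanSingleton R⁰ d) *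
            ((1 / J) * J) := by ring
      _ = (1 / J) * J := by rw [hcancel, one_mul]
      _ ≤ 1 := one_div_mul_self_le_one hJ

lemma divClos_eq_one_of_maximal_nondiv {M : Ideal R} (hM : M.IsMaximal)
    (hMnd : ¬ Divisorial R M) : divClos R M = 1 := by
  have hM0 : M ≠ ⊥ := nondiv_ne_bot hMnd
  obtain ⟨J, hJ⟩ := FractionalIdeal.le_one_iff_exists_coeIdeal.mp (divClos_le_one M hM0)
  have hMJ : M ≤ J :=
    (FractionalIdeal.coeIdeal_le_coeIdeal (FractionRing R)).mp (hJ ▸ le_divClos M hM0)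
  have hJtop : J = ⊤ := by
    by_contra hne
    exact hMnd (by rw [Divisorial, ← hJ, hM.eq_of_le hne hMJ])
  rw [← hJ, hJtop, FractionalIdeal.coeIdeal_top]

end Aux

/-- If the maximal ideal `M` of a valuation domain `V` is not divisorial, then a nonzero
ideal `I` of `V` is nondivisorial iff `I = xM` for some `x ∈ V`. -/
theorem stmt0 (V : Type*) [CommRing V] [IsDomain V] [ValuationRing V]
    (M : Ideal V) (hM : M.IsMaximal) (hMnd : ¬ Divisorial V M)
    (I : Ideal V) (hI : I ≠ ⊥) :
    ¬ Divisorial V I ↔ ∃ x : V, I = Ideal.span {x} * M := by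
  set K := FractionRing V
  set f := algebraMap V K with hf
  have hfinj : Function.Injective f := IsFractionRing.injective V K
  constructor
  · intro hnd
    have hne : ¬ ((divClos V I : Submodule V K) ≤
        ((I : FractionalIdeal V⁰ K) : Submodule V K)) := by
      rw [FractionalIdeal.coe_le_coe]
      intro hle
      exact hnd (le_antisymm hle (le_divClos I hI))
    obtain ⟨ξ, hξv, hξI⟩ := SetLike.not_le_iff_exists.mp hne
    have hξv' : ξ ∈ divClos V I := hξv
    have hξ1 : ξ ∈ (1 : FractionalIdeal V⁰ K) := divClos_le_one I hI hξv'
    obtain ⟨y, hy⟩ := (FractionalIdeal.mem_one_iff _).mp hξ1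
    subst hy
    have hyI : y ∉ I := fun h => hξI (FractionalIdeal.mem_coeIdeal_of_mem _ h)
    have hy0 : y ≠ 0 := fun h => hyI (h ▸ I.zero_mem)
    have hdvd : ∀ z : V, z ∉ I → ∀ a ∈ I, z ∣ a := by
      intro z hz a ha
      refine (ValuationRing.dvd_total z a).resolve_right (fun hd => ?_)
      obtain ⟨c, rfl⟩ := hd
      exact hz (I.mul_mem_right c ha)
    have hyM : ∀ m ∈ M, y * m ∈ I := by
      intro m hm
      by_contra hym
      have hm0 : m ≠ 0 := fun h => hym (by rw [h, mul_zero]; exact I.zero_mem)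
      have hym0 : y * m ≠ 0 := mul_ne_zero hy0 hm0
      have hfym0 : f (y * m) ≠ 0 := fun h => hym0 (hfinj (by rw [h, map_zero]))
      have hinv : (f (y * m))⁻¹ ∈ 1 / (I : FractionalIdeal V⁰ K) := by
        rw [FractionalIdeal.mem_div_iff_of_ne_zero (by simpa using hI)]
        intro z hz
        obtain ⟨a, ha, rfl⟩ := (FractionalIdeal.mem_coeIdeal _).mp hz
        obtain ⟨c, rfl⟩ := hdvd (y * m) hym a ha
        refine (FractionalIdeal.mem_one_iff _).mpr ⟨c, ?_⟩
        have hfym0' : f y * f m ≠ 0 := by rw [← map_mul]; exact hfym0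
        rw [map_mul, map_mul, map_mul, inv_mul_cancel_left₀ hfym0']
      have hmem : f y * (f (y * m))⁻¹ ∈ (1 : FractionalIdeal V⁰ K) := by
        have hξv'' : f y ∈ (1 / (1 / (I : FractionalIdeal V⁰ K))) := hξv'
        exact (FractionalIdeal.mem_div_iff_of_ne_zero (one_div_ne_zero' I hI)).mp
          hξv'' _ hinv
      obtain ⟨n, hn⟩ := (FractionalIdeal.mem_one_iff _).mp hmem
      have hfy : f y ≠ 0 := fun h => hy0 (hfinj (by rw [h, map_zero]))
      have hfm : f m ≠ 0 := fun h => hm0 (hfinj (by rw [h, map_zero]))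
      have h1 : f (m * n) = f 1 := by
        rw [map_mul, map_one, hn, map_mul]
        rw [mul_inv, ← mul_assoc (f y), mul_inv_cancel₀ hfy, one_mul, mul_inv_cancel₀ hfm]
      have hmn : m * n = 1 := hfinj h1
      exact hM.ne_top (Ideal.eq_top_of_isUnit_mem M hm (IsUnit.of_mul_eq_one n hmn))
    refine ⟨y, le_antisymm ?_ (Ideal.span_singleton_mul_le_iff.mpr hyM)⟩
    intro a ha
    obtain ⟨c, rfl⟩ := hdvd y hyI a ha
    have hcM : c ∈ M := by
      rw [IsLocalRing.eq_maximalIdeal hM, IsLocalRing.mem_maximalIdeal, mem_nonunits_iff]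
      intro hc
      obtain ⟨u, rfl⟩ := hc
      exact hyI (by simpa [mul_assoc] using I.mul_mem_right (↑u⁻¹ : V) ha)
    exact Ideal.mul_mem_mul (Ideal.mem_span_singleton_self y) hcM
  · rintro ⟨x, rfl⟩ hdiv
    have hM0 : M ≠ ⊥ := nondiv_ne_bot hMnd
    have hx0 : x ≠ 0 := by
      rintro rfl
      exact hI (by simp)
    have hd : f x ≠ 0 := fun h => hx0 (hfinj (by rw [h, map_zero]))
    have hJ : (M : FractionalIdeal V⁰ K) ≠ 0 := by simpa using hM0
    have hcoe : ((Ideal.span {x} * M : Ideal V) : FractionalIdeal V⁰ K) =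
        FractionalIdeal.spanSingleton V⁰ (f x) * (M : FractionalIdeal V⁰ K) := by
      rw [FractionalIdeal.coeIdeal_mul, FractionalIdeal.coeIdeal_span_singleton]
    have hdc : divClos V (Ideal.span {x} * M) =
        FractionalIdeal.spanSingleton V⁰ (f x) := by
      rw [divClos, hcoe, one_div_spanSingleton_mul hd hJ,
        one_div_spanSingleton_mul (inv_ne_zero hd) (one_div_ne_zero' M hM0), inv_inv]
      have : (1 / (1 / (M : FractionalIdeal V⁰ K))) = divClos V M := rfl
      rw [this, divClos_eq_one_of_maximal_nondiv hM hMnd, mul_one]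
    have heq : FractionalIdeal.spanSingleton V⁰ (f x) =
        FractionalIdeal.spanSingleton V⁰ (f x) * (M : FractionalIdeal V⁰ K) := by
      rw [← hcoe, ← hdiv, hdc]
    have hone : (1 : FractionalIdeal V⁰ K) = (M : FractionalIdeal V⁰ K) := by
      have h2 := congrArg (FractionalIdeal.spanSingleton V⁰ (f x)⁻¹ * ·) heq
      simpa [← mul_assoc, FractionalIdeal.spanSingleton_mul_spanSingleton,
        inv_mul_cancel₀ hd, FractionalIdeal.spanSingleton_one] using h2
    have : (⊤ : Ideal V) = M := by
      rw [← FractionalIdeal.coeIdeal_inj (K := K), FractionalIdeal.coeIdeal_top]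
      exact hone
    exact hM.ne_top this.symm
end
end

section
/- Let V be a valuation domain with maximal ideal M. If M is divisorial, then M is principal and every nonzero ideal of V is divisorial. -/
open scoped nonZeroDivisors

noncomputable section

variable (R : Type*) [CommRing R] [IsDomain R]

section AuxVal

variable {V : Type*} [CommRing V] [IsDomain V] [ValuationRing V]

lemma aux_not_one {x : FractionRing V} (hx : x ∉ (1 : FractionalIdeal V⁰ (FractionRing V))) :
    ∃ a : V, ¬IsUnit a ∧ algebraMap V (FractionRing V) a = x⁻¹ := by
  have hx0 : x ≠ 0 := fun h => hx (h ▸ FractionalIdeal.zero_mem _)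
  rcases ValuationRing.isInteger_or_isInteger V x with ⟨a, ha⟩ | ⟨a, ha⟩
  · exact absurd ((FractionalIdeal.mem_one_iff _).mpr ⟨a, ha⟩) hx
  · refine ⟨a, fun hu => ?_, ha⟩
    rcases hu with ⟨u, rfl⟩
    apply hx
    refine (FractionalIdeal.mem_one_iff _).mpr ⟨((u⁻¹ : Vˣ) : V), ?_⟩
    have h1 : algebraMap V (FractionRing V) ((u⁻¹ : Vˣ) : V) * x⁻¹ = 1 := by
      rw [← ha, ← RingHom.map_mul]; simp
    have := eq_inv_of_mul_eq_one_left h1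
    rwa [inv_inv] at this

theorem stmt1_aux (M : Ideal V) (hM : M.IsMaximal) (hMd : Divisorial V M) :
    M.IsPrincipal ∧ ∀ I : Ideal V, I ≠ ⊥ → Divisorial V I := by
  classical
  set K := FractionRing V with hK
  set f : V →+* K := algebraMap V K with hf
  have finj : Function.Injective f := IsFractionRing.injective V K
  by_cases hM0 : M = ⊥
  · subst hM0
    refine ⟨bot_isPrincipal, fun I hI => ?_⟩
    have hItop : I = ⊤ := hM.1.2 I (bot_lt_iff_ne_bot.mpr hI)
    subst hItop
    unfold Divisorial divClos
    rw [FractionalIdeal.coeIdeal_top, FractionalIdeal.div_one, FractionalIdeal.div_one]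
  · have hMne : (M : FractionalIdeal V⁰ K) ≠ 0 := by
      simpa only [ne_eq, FractionalIdeal.coeIdeal_eq_zero] using hM0
    obtain ⟨t, htM⟩ : ∃ t, M = Ideal.span {t} := by
      by_cases h1 : (1 : FractionalIdeal V⁰ K) / (M : FractionalIdeal V⁰ K) = 1
      · exfalso
        have hd : divClos V M = 1 := by
          unfold divClos; rw [h1, FractionalIdeal.div_one]
        have : (M : FractionalIdeal V⁰ K) = ((⊤ : Ideal V) : FractionalIdeal V⁰ K) := by
          rw [← hMd, hd, FractionalIdeal.coeIdeal_top]
        exact hM.ne_top (FractionalIdeal.coeIdeal_inj.mp this)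
      · have hle : (1 : FractionalIdeal V⁰ K) ≤ 1 / (M : FractionalIdeal V⁰ K) := by
          rw [FractionalIdeal.le_div_iff_mul_le hMne, one_mul]
          exact FractionalIdeal.coeIdeal_le_one
        obtain ⟨x, hx1, hx2⟩ : ∃ x, x ∈ (1 : FractionalIdeal V⁰ K) / (M : FractionalIdeal V⁰ K)
            ∧ x ∉ (1 : FractionalIdeal V⁰ K) := by
          by_contra h; push_neg at h
          exact h1 (le_antisymm (fun y hy => h y hy) hle)
        obtain ⟨a, hau, ha⟩ := aux_not_one hx2
        have hx0 : x ≠ 0 := fun h => hx2 (h ▸ FractionalIdeal.zero_mem _)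
        refine ⟨a, le_antisymm ?_ ?_⟩
        · intro m hm
          have hmm : f m ∈ (M : FractionalIdeal V⁰ K) :=
            (FractionalIdeal.mem_coeIdeal _).mpr ⟨m, hm, rfl⟩
          have h2 := (FractionalIdeal.mem_div_iff_of_ne_zero hMne).mp hx1 (f m) hmm
          obtain ⟨b, hb⟩ := (FractionalIdeal.mem_one_iff _).mp h2
          have : f (a * b) = f m := by
            rw [RingHom.map_mul, ha, hb, ← mul_assoc, inv_mul_cancel₀ hx0, one_mul]
          exact Ideal.mem_span_singleton'.mpr ⟨b, by rw [mul_comm]; exact finj this⟩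
        · rw [Ideal.span_le, Set.singleton_subset_iff]
          have hMloc : M = IsLocalRing.maximalIdeal V := IsLocalRing.eq_maximalIdeal hM
          rw [SetLike.mem_coe, hMloc]
          exact hau
    have htmem : t ∈ M := htM ▸ Ideal.mem_span_singleton_self t
    have ht0 : t ≠ 0 := by
      rintro rfl
      exact hM0 (by rw [htM, Ideal.span_singleton_eq_bot])
    have htu : ¬IsUnit t := fun h => hM.ne_top (Ideal.eq_top_of_isUnit_mem _ htmem h)
    have hft : f t ≠ 0 := fun h => ht0 (finj (by simpa using h))
    refine ⟨⟨⟨t, htM⟩⟩, fun I hI => ?_⟩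
    have hIne : (I : FractionalIdeal V⁰ K) ≠ 0 := by
      simpa only [ne_eq, FractionalIdeal.coeIdeal_eq_zero] using hI
    have hle1 : (1 : FractionalIdeal V⁰ K) ≤ 1 / (I : FractionalIdeal V⁰ K) := by
      rw [FractionalIdeal.le_div_iff_mul_le hIne, one_mul]
      exact FractionalIdeal.coeIdeal_le_one
    have hinv_ne : (1 : FractionalIdeal V⁰ K) / (I : FractionalIdeal V⁰ K) ≠ 0 := by
      intro h
      have h1mem : (1 : K) ∈ (1 : FractionalIdeal V⁰ K) / (I : FractionalIdeal V⁰ K) :=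
        hle1 ((FractionalIdeal.mem_one_iff _).mpr ⟨1, map_one _⟩)
      rw [h] at h1mem
      exact one_ne_zero ((FractionalIdeal.mem_zero_iff _).mp h1mem)
    unfold Divisorial divClos
    refine le_antisymm ?_ ?_
    · intro z hz
      by_contra hzI
      have hz0 : z ≠ 0 := fun h => hzI (h ▸ FractionalIdeal.zero_mem (I : FractionalIdeal V⁰ K))
      have hzt0 : z * f t ≠ 0 := mul_ne_zero hz0 hft
      have key : (z * f t)⁻¹ ∈ (1 : FractionalIdeal V⁰ K) / (I : FractionalIdeal V⁰ K) := by
        rw [FractionalIdeal.mem_div_iff_of_ne_zero hIne]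
        intro y hy
        obtain ⟨a, haI, rfl⟩ := (FractionalIdeal.mem_coeIdeal _).mp hy
        by_cases ha0 : a = 0
        · subst ha0
          rw [RingHom.map_zero, mul_zero]
          exact FractionalIdeal.zero_mem _
        have hfa0 : f a ≠ 0 := fun h => ha0 (finj (by simpa using h))
        rcases ValuationRing.isInteger_or_isInteger V (z⁻¹ * f a) with ⟨u, hu⟩ | ⟨u, hu⟩
        · have h2 : z * f u = f a := by
            rw [hu, ← mul_assoc, mul_inv_cancel₀ hz0, one_mul]
          by_cases huu : IsUnit u
          · exfalso
            rcases huu with ⟨w, rfl⟩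
            apply hzI
            refine (FractionalIdeal.mem_coeIdeal _).mpr ⟨a * ((w⁻¹ : Vˣ) : V),
              I.mul_mem_right _ haI, ?_⟩
            have hfw : f (w : V) ≠ 0 := fun h => w.ne_zero (finj (by simpa using h))
            apply mul_right_cancel₀ hfw
            rw [← RingHom.map_mul]
            have haw : a * ((w⁻¹ : Vˣ) : V) * (w : V) = a := by
              rw [mul_assoc]; simp
            rw [haw]
            exact h2.symm
          · have humem : u ∈ M := by
              have hMloc : M = IsLocalRing.maximalIdeal V := IsLocalRing.eq_maximalIdeal hM
              rw [hMloc]; exact huu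
            obtain ⟨c, hc⟩ := Ideal.mem_span_singleton'.mp (htM ▸ humem)
            refine (FractionalIdeal.mem_one_iff _).mpr ⟨c, ?_⟩
            have hfa : f a = z * f t * f c := by
              rw [← h2, ← hc, RingHom.map_mul]; ring
            rw [hfa, ← mul_assoc, inv_mul_cancel₀ hzt0, one_mul]
        · exfalso
          apply hzI
          have hz' : f u * f a = z := by
            rw [hu, mul_inv, inv_inv, mul_assoc, inv_mul_cancel₀ hfa0, mul_one]
          exact (FractionalIdeal.mem_coeIdeal _).mpr
            ⟨u * a, I.mul_mem_left u haI, by rw [RingHom.map_mul, hz']⟩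
      have h3 := (FractionalIdeal.mem_div_iff_of_ne_zero hinv_ne).mp hz _ key
      have h4 : z * (z * f t)⁻¹ = (f t)⁻¹ := by
        rw [mul_inv, ← mul_assoc, mul_inv_cancel₀ hz0, one_mul]
      rw [h4] at h3
      obtain ⟨s, hs⟩ := (FractionalIdeal.mem_one_iff _).mp h3
      have : s * t = 1 := by
        apply finj
        rw [RingHom.map_mul, RingHom.map_one, hs, inv_mul_cancel₀ hft]
      exact htu (IsUnit.of_mul_eq_one (a := t) s (by rw [mul_comm]; exact this))
    · rw [FractionalIdeal.le_div_iff_mul_le hinv_ne]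
      exact FractionalIdeal.mul_one_div_le_one

end AuxVal

/-- If the maximal ideal `M` of a valuation domain `V` is divisorial, then `M` is principal
and every nonzero ideal of `V` is divisorial. -/
theorem stmt1 (V : Type*) [CommRing V] [IsDomain V] [ValuationRing V]
    (M : Ideal V) (hM : M.IsMaximal) (hMd : Divisorial V M) :
    M.IsPrincipal ∧ ∀ I : Ideal V, I ≠ ⊥ → Divisorial V I :=
  stmt1_aux M hM hMd
end
end

section
/- In a valuation domain V with maximal ideal M, if I is a nonzero ideal of V that is not principal, then I = IM. -/
open scoped nonZeroDivisors

noncomputable section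

variable (R : Type*) [CommRing R] [IsDomain R]

/-- In a valuation domain `V` with maximal ideal `M`, a nonzero nonprincipal ideal `I`
satisfies `I = IM`. -/
theorem stmt2 (V : Type*) [CommRing V] [IsDomain V] [ValuationRing V]
    (M : Ideal V) (hM : M.IsMaximal)
    (I : Ideal V) (hI : I ≠ ⊥) (hnp : ¬ I.IsPrincipal) :
    I = I * M := by
  apply le_antisymm _ Ideal.mul_le_left
  intro a ha
  -- I ≠ (a), so exists b ∈ I, b ∉ span {a}
  have hne : I ≠ Ideal.span {a} := fun h => hnp ⟨a, h⟩
  have hle : Ideal.span {a} ≤ I := by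
    rw [Ideal.span_le, Set.singleton_subset_iff]; exact ha
  obtain ⟨b, hbI, hbna⟩ : ∃ b ∈ I, b ∉ Ideal.span ({a} : Set V) := by
    by_contra h
    push_neg at h
    exact hne (le_antisymm h hle)
  -- a ∤ b, so b ∣ a
  obtain ⟨c, hc | hc⟩ := ValuationRing.cond a b
  · exact absurd (Ideal.mem_span_singleton.2 ⟨c, hc.symm⟩) hbna
  -- a = b * c, c nonunit
  have hcnu : ¬ IsUnit c := by
    intro hu
    apply hbna
    rw [Ideal.mem_span_singleton]
    exact ⟨↑hu.unit⁻¹, by rw [← hc, mul_assoc, IsUnit.mul_val_inv, mul_one]⟩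
  have hMeq : M = IsLocalRing.maximalIdeal V := IsLocalRing.eq_maximalIdeal hM
  have hcM : c ∈ M := by rw [hMeq]; exact hcnu
  rw [← hc]
  exact Ideal.mul_mem_mul hbI hcM
end
end

section
/- Let R be an h-local Prüfer domain and I a nonzero divisorial ideal of R. If M is a nondivisorial maximal ideal of R containing I, then I R_M is a divisorial ideal of R_M properly contained in M R_M. -/
open scoped nonZeroDivisors

noncomputable section

variable (R : Type*) [CommRing R] [IsDomain R]

open scoped Pointwise

namespace Stmt3Aux

variable {R}


/-- In an h-local domain, a nonzero `N`-saturated proper ideal is contained in no maximal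
ideal other than `N`. -/
theorem sat_unique_max (hH : HLocal R) {B : Ideal R} (hB : B ≠ ⊥)
    {N : Ideal R} (hN : N.IsMaximal)
    (hsat : ∀ r t : R, t ∉ N → t * r ∈ B → r ∈ B)
    {P : Ideal R} (hP : P.IsMaximal) (hBP : B ≤ P) : P = N := by
  by_contra hPN
  haveI := hP.isPrime
  obtain ⟨Q, hQmin, hQP⟩ := Ideal.exists_minimalPrimes_le hBP
  obtain ⟨⟨hQprime, hBQ⟩, hQmin2⟩ := hQmin
  have hQbot : Q ≠ ⊥ := fun h => hB (le_bot_iff.mp (h ▸ hBQ))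
  have hQN : ¬ Q ≤ N := by
    intro h
    obtain ⟨Mx, _, huniq⟩ := hH.2 Q hQprime hQbot
    exact hPN ((huniq P ⟨hP, hQP⟩).trans (huniq N ⟨hN, h⟩).symm)
  obtain ⟨s, hsQ, hsN⟩ := SetLike.not_le_iff_exists.mp hQN
  have hone : (1 : R) ∉ Q := fun h => hQprime.ne_top ((Ideal.eq_top_iff_one Q).mpr h)
  have key : ∃ n : ℕ, ∃ u, u ∉ Q ∧ u * s ^ n ∈ B := by
    by_contra hcon
    push_neg at hcon
    set T : Submonoid R :=
      { carrier := {x | ∃ n : ℕ, ∃ u, u ∉ Q ∧ x = u * s ^ n}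
        mul_mem' := by
          rintro x y ⟨n, u, hu, rfl⟩ ⟨m, v, hv, rfl⟩
          exact ⟨n + m, u * v, fun h => (hQprime.mem_or_mem h).elim hu hv, by ring⟩
        one_mem' := ⟨0, 1, hone, by ring⟩ } with hT
    have hdisj : Disjoint (B : Set R) (T : Set R) := by
      rw [Set.disjoint_left]
      rintro x hxB ⟨n, u, hu, rfl⟩
      exact hcon n u hu hxB
    obtain ⟨p, hp, hBp, hdisj'⟩ := Ideal.exists_le_prime_disjoint B T hdisj
    have hpQ : p ≤ Q := by
      intro x hxp
      by_contra hxQ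
      exact (Set.disjoint_left.mp hdisj' hxp) ⟨0, x, hxQ, by ring⟩
    have hsp : s ∉ p := fun h => (Set.disjoint_left.mp hdisj' h) ⟨1, 1, hone, by ring⟩
    exact hsp (hQmin2 ⟨hp, hBp⟩ hpQ hsQ)
  obtain ⟨n, u, hu, hmem⟩ := key
  have hsnN : s ^ n ∉ N := fun h => hsN (hN.isPrime.mem_of_pow_mem n h)
  exact hu (hBQ (hsat u (s ^ n) hsnN (by rwa [mul_comm])))

/-- The ideal of `r : R` such that `a*r*i/b` is in `R_N` for all `i ∈ I`. -/
def CN (N : Ideal R) (hNp : N.IsPrime) (a b : R) (I : Ideal R) : Ideal R where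
  carrier := {r | ∀ i ∈ I, ∃ s, s ∉ N ∧ ∃ c, s * (a * (r * i)) = b * c}
  zero_mem' := fun i _ => ⟨1, fun h => hNp.ne_top ((Ideal.eq_top_iff_one N).mpr h), 0, by ring⟩
  add_mem' := by
    rintro x y hx hy i hi
    obtain ⟨s₁, hs₁, c₁, e₁⟩ := hx i hi
    obtain ⟨s₂, hs₂, c₂, e₂⟩ := hy i hi
    refine ⟨s₁ * s₂, fun h => (hNp.mem_or_mem h).elim hs₁ hs₂, s₂ * c₁ + s₁ * c₂, ?_⟩
    linear_combination s₂ * e₁ + s₁ * e₂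
  smul_mem' := by
    intro t x hx i hi
    obtain ⟨s, hs, c, e⟩ := hx i hi
    exact ⟨s, hs, t * c, by simp only [smul_eq_mul]; linear_combination t * e⟩

theorem mem_CN {N : Ideal R} {hNp : N.IsPrime} {a b : R} {I : Ideal R} {r : R} :
    r ∈ CN N hNp a b I ↔ ∀ i ∈ I, ∃ s, s ∉ N ∧ ∃ c, s * (a * (r * i)) = b * c := Iff.rfl

theorem CN_sat {N : Ideal R} {hNp : N.IsPrime} {a b : R} {I : Ideal R} {r t : R}
    (ht : t ∉ N) (h : t * r ∈ CN N hNp a b I) : r ∈ CN N hNp a b I := by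
  intro i hi
  obtain ⟨s, hs, c, e⟩ := h i hi
  exact ⟨s * t, fun hmem => (hNp.mem_or_mem hmem).elim hs ht, c, by linear_combination e⟩

theorem b_mem_CN {N : Ideal R} {hNp : N.IsPrime} {a b : R} {I : Ideal R} :
    b ∈ CN N hNp a b I := fun i _ =>
  ⟨1, fun h => hNp.ne_top ((Ideal.eq_top_iff_one N).mpr h), a * i, by ring⟩

theorem CN_eq_top {N : Ideal R} {hNp : N.IsPrime} {a b : R} {I : Ideal R} (hb : b ∉ N) :
    CN N hNp a b I = ⊤ := by
  rw [Ideal.eq_top_iff_one]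
  exact CN_sat hb (by simpa [mul_one] using (b_mem_CN (N := N) (hNp := hNp) (a := a) (I := I)))

theorem exists_finset_inf_le_prime {ι : Type*} (s : Finset ι) (f : ι → Ideal R)
    {P : Ideal R} (hP : P.IsPrime) (h : s.inf f ≤ P) : ∃ i ∈ s, f i ≤ P := by
  classical
  induction s using Finset.induction_on with
  | empty => exact absurd (top_unique (by simpa using h)) hP.ne_top
  | insert a s ha ih =>
    rw [Finset.inf_insert] at h
    by_cases hfa : f a ≤ P
    · exact ⟨a, Finset.mem_insert_self a s, hfa⟩
    · obtain ⟨x, hxf, hxP⟩ := SetLike.not_le_iff_exists.mp hfa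
      have hinf : s.inf f ≤ P := by
        intro y hy
        have : x * y ∈ P := h ⟨Ideal.mul_mem_right _ _ hxf, Ideal.mul_mem_left _ _ hy⟩
        exact (hP.mem_or_mem this).resolve_left hxP
      obtain ⟨i, his, hi⟩ := ih hinf
      exact ⟨i, Finset.mem_insert_of_mem his, hi⟩

/-- The key h-local lemma: if `a*i/b ∈ R_M` for each `i ∈ I`, then there is a single
`s ∉ M` with `s*a*i/b ∈ R` for all `i ∈ I`. -/
theorem hlocal_key (hH : HLocal R) {M : Ideal R} (hMmax : M.IsMaximal)
    {I : Ideal R} (a b : R) (hb : b ≠ 0)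
    (h : ∀ i ∈ I, ∃ s, s ∉ M ∧ ∃ c, s * (a * i) = b * c) :
    ∃ s, s ∉ M ∧ ∀ i ∈ I, ∃ c, s * (a * i) = b * c := by
  classical
  by_contra hcon
  push_neg at hcon
  have hglob : ∀ s : R, (∀ i ∈ I, ∃ c, s * (a * i) = b * c) → s ∈ M := by
    intro s hs
    by_contra hsM
    obtain ⟨i, hi, hne⟩ := hcon s hsM
    obtain ⟨c, hc⟩ := hs i hi
    exact hne c hc
  set Sfin := (hH.1 b hb).toFinset with hSfin
  set f : Ideal R → Ideal R := fun N => if hNp : N.IsPrime then CN N hNp a b I else ⊤ with hf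
  have hFle : Sfin.inf f ≤ M := by
    intro r hr
    have hrCN : ∀ (N : Ideal R) (hNm : N.IsMaximal), r ∈ CN N hNm.isPrime a b I := by
      intro N hNm
      by_cases hbN : b ∈ N
      · have hNS : N ∈ Sfin := (hH.1 b hb).mem_toFinset.mpr ⟨hNm, hbN⟩
        have h2 := (Finset.inf_le hNS : Sfin.inf f ≤ f N) hr
        simpa only [hf, dif_pos hNm.isPrime] using h2
      · rw [CN_eq_top hbN]; trivial
    apply hglob
    intro j hj
    set D := (Ideal.span {b}).colon (Ideal.span {a * (r * j)}) with hD
    have hDtop : D = ⊤ := by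
      by_contra hD'
      obtain ⟨N, hNm, hDN⟩ := Ideal.exists_le_maximal D hD'
      obtain ⟨s, hs, c, e⟩ := hrCN N hNm j hj
      refine hs (hDN (Ideal.mem_colon_span_singleton.mpr (Ideal.mem_span_singleton'.mpr ⟨c, ?_⟩)))
      linear_combination -e
    have h1 : (1 : R) ∈ D := hDtop ▸ Submodule.mem_top
    obtain ⟨c, hc⟩ := Ideal.mem_span_singleton'.mp (Ideal.mem_colon_span_singleton.mp h1)
    exact ⟨c, by linear_combination -hc⟩
  obtain ⟨N, hNS, hfN⟩ := exists_finset_inf_le_prime Sfin f hMmax.isPrime hFle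
  obtain ⟨hNm, hbN⟩ := (hH.1 b hb).mem_toFinset.mp hNS
  have hCNle : CN N hNm.isPrime a b I ≤ M := by
    simpa only [hf, dif_pos hNm.isPrime] using hfN
  have hCNne : CN N hNm.isPrime a b I ≠ ⊥ := fun hbot => hb (by
    have hbm : b ∈ CN N hNm.isPrime a b I := b_mem_CN
    rw [hbot] at hbm
    exact hbm)
  have hMN : M = N := by
    refine sat_unique_max hH hCNne hNm (fun r t ht hmem => CN_sat ht hmem) hMmax hCNle
  have h1 : (1 : R) ∈ CN N hNm.isPrime a b I := by
    intro i hi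
    obtain ⟨s, hs, c, e⟩ := h i hi
    exact ⟨s, hMN ▸ hs, c, by linear_combination e⟩
  exact hMmax.ne_top ((Ideal.eq_top_iff_one M).mpr (hCNle h1))


section FieldSide

theorem le_of_mem_imp {S : Submonoid R} {P : Type*} [CommRing P] [Algebra R P]
    {I J : FractionalIdeal S P} (h : ∀ x ∈ I, x ∈ J) : I ≤ J := by
  rw [← FractionalIdeal.coe_le_coe]
  intro x hx
  exact FractionalIdeal.mem_coe.mpr (h x (FractionalIdeal.mem_coe.mp hx))

variable (M : Ideal R) [hMp : M.IsPrime]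

theorem L2K (hH : HLocal R) (hMmax : M.IsMaximal) {I : Ideal R} (x : FractionRing R)
    (h : ∀ i ∈ I, ∃ z : Localization.AtPrime M,
      algebraMap (Localization.AtPrime M) (FractionRing R) z = x * algebraMap R (FractionRing R) i) :
    ∃ s, s ∉ M ∧ ∀ i ∈ I, ∃ c : R,
      algebraMap R (FractionRing R) s * x * algebraMap R (FractionRing R) i
        = algebraMap R (FractionRing R) c := by
  set φ := algebraMap R (FractionRing R) with hφ
  set ψ := algebraMap (Localization.AtPrime M) (FractionRing R) with hψ
  obtain ⟨⟨a, ⟨b, hb⟩⟩, hx⟩ := IsLocalization.mk'_surjective R⁰ x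
  have hbne : b ≠ 0 := nonZeroDivisors.ne_zero hb
  have e1 : x * φ b = φ a := by rw [← hx]; exact IsLocalization.mk'_spec _ a ⟨b, hb⟩
  have hdvd : ∀ i ∈ I, ∃ s, s ∉ M ∧ ∃ c, s * (a * i) = b * c := by
    intro i hi
    obtain ⟨z, hz⟩ := h i hi
    obtain ⟨⟨c, ⟨s, hs⟩⟩, hzeq⟩ := IsLocalization.mk'_surjective M.primeCompl z
    refine ⟨s, hs, c, ?_⟩
    have e2 : ψ z * φ s = φ c := by
      rw [← hzeq, hφ, IsScalarTower.algebraMap_apply R (Localization.AtPrime M) (FractionRing R) s,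
        IsScalarTower.algebraMap_apply R (Localization.AtPrime M) (FractionRing R) c, hψ, ← map_mul]
      congr 1
      exact IsLocalization.mk'_spec _ c ⟨s, hs⟩
    apply IsFractionRing.injective R (FractionRing R)
    show φ _ = φ _
    rw [map_mul, map_mul, map_mul]
    linear_combination (-(φ s * φ i)) * e1 + φ b * e2 - φ b * φ s * hz
  obtain ⟨s, hs, hall⟩ := hlocal_key hH hMmax a b hbne hdvd
  refine ⟨s, hs, fun i hi => ?_⟩
  obtain ⟨c, hc⟩ := hall i hi
  refine ⟨c, ?_⟩
  have hb0 : φ b ≠ 0 := fun h0 => hbne (by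
    apply IsFractionRing.injective R (FractionRing R)
    rw [map_zero]; exact h0)
  apply mul_right_cancel₀ hb0
  have hφc := congrArg φ hc
  rw [map_mul, map_mul, map_mul] at hφc
  linear_combination hφc + φ s * φ i * e1

theorem exists_psi_eq {s : R} (hs : s ∉ M) {x : FractionRing R} {r : R}
    (hx : algebraMap R (FractionRing R) s * x = algebraMap R (FractionRing R) r) :
    ∃ z : Localization.AtPrime M, algebraMap (Localization.AtPrime M) (FractionRing R) z = x := by
  set φ := algebraMap R (FractionRing R)
  set ψ := algebraMap (Localization.AtPrime M) (FractionRing R)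
  set χ := algebraMap R (Localization.AtPrime M)
  have hu : IsUnit (χ s) := IsLocalization.map_units (M := M.primeCompl) (Localization.AtPrime M) ⟨s, hs⟩
  refine ⟨↑hu.unit⁻¹ * χ r, ?_⟩
  have hs0 : φ s ≠ 0 := fun h0 => hs (by
    have hz : s = 0 := IsFractionRing.injective R (FractionRing R) (by rw [map_zero]; exact h0)
    rw [hz]; exact M.zero_mem)
  apply mul_left_cancel₀ hs0
  have key : χ s * (↑hu.unit⁻¹ * χ r) = χ r := by rw [← mul_assoc, hu.mul_val_inv, one_mul]
  calc φ s * ψ (↑hu.unit⁻¹ * χ r)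
      = ψ (χ s) * ψ (↑hu.unit⁻¹ * χ r) := by
        rw [← IsScalarTower.algebraMap_apply R (Localization.AtPrime M) (FractionRing R) s]
    _ = ψ (χ r) := by rw [← map_mul, key]
    _ = φ r := (IsScalarTower.algebraMap_apply R (Localization.AtPrime M) (FractionRing R) r).symm
    _ = φ s * x := hx.symm

theorem phi_mem_coeIdeal_map {I : Ideal R} {i : R} (hi : i ∈ I) :
    algebraMap R (FractionRing R) i ∈
      ((I.map (algebraMap R (Localization.AtPrime M)) : Ideal (Localization.AtPrime M)) :
        FractionalIdeal (Localization.AtPrime M)⁰ (FractionRing R)) :=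
  (FractionalIdeal.mem_coeIdeal _).mpr ⟨algebraMap R (Localization.AtPrime M) i,
    Ideal.mem_map_of_mem _ hi,
    (IsScalarTower.algebraMap_apply R (Localization.AtPrime M) (FractionRing R) i).symm⟩

theorem mem_coeIdeal_map_of {I : Ideal R} {x : FractionRing R} {s : R} (hs : s ∉ M) {i : R}
    (hi : i ∈ I) (hx : algebraMap R (FractionRing R) s * x = algebraMap R (FractionRing R) i) :
    x ∈ ((I.map (algebraMap R (Localization.AtPrime M)) : Ideal (Localization.AtPrime M)) :
        FractionalIdeal (Localization.AtPrime M)⁰ (FractionRing R)) := by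
  set χ := algebraMap R (Localization.AtPrime M)
  have hu : IsUnit (χ s) := IsLocalization.map_units (M := M.primeCompl) (Localization.AtPrime M) ⟨s, hs⟩
  obtain ⟨z, hz⟩ := exists_psi_eq M hs hx
  refine (FractionalIdeal.mem_coeIdeal _).mpr ⟨z, ?_, hz⟩
  have hzz : χ s * z = χ i := by
    apply IsFractionRing.injective (Localization.AtPrime M) (FractionRing R)
    rw [map_mul, hz, ← IsScalarTower.algebraMap_apply R (Localization.AtPrime M) (FractionRing R) s,
      ← IsScalarTower.algebraMap_apply R (Localization.AtPrime M) (FractionRing R) i]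
    exact hx
  have hrw : z = ↑hu.unit⁻¹ * χ i := by
    rw [← hzz, ← mul_assoc, hu.val_inv_mul, one_mul]
  rw [hrw]
  exact Ideal.mul_mem_left _ _ (Ideal.mem_map_of_mem _ hi)

theorem mul_coeIdeal_map_le_one {I : Ideal R} {w : FractionRing R}
    (hw : ∀ i ∈ I, ∃ c : R, w * algebraMap R (FractionRing R) i = algebraMap R (FractionRing R) c)
    {y : FractionRing R}
    (hy : y ∈ ((I.map (algebraMap R (Localization.AtPrime M)) : Ideal (Localization.AtPrime M)) :
        FractionalIdeal (Localization.AtPrime M)⁰ (FractionRing R))) :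
    w * y ∈ (1 : FractionalIdeal (Localization.AtPrime M)⁰ (FractionRing R)) := by
  set χ := algebraMap R (Localization.AtPrime M)
  set ψ := algebraMap (Localization.AtPrime M) (FractionRing R)
  obtain ⟨t, ht, rfl⟩ := (FractionalIdeal.mem_coeIdeal _).mp hy
  have key : ∀ t ∈ I.map χ,
      w * ψ t ∈ (1 : FractionalIdeal (Localization.AtPrime M)⁰ (FractionRing R)) := by
    intro t ht
    have ht' : t ∈ Ideal.span (χ '' (I : Set R)) := ht
    refine Submodule.span_induction ?_ ?_ ?_ ?_ ht'
    · rintro u ⟨i, hi, rfl⟩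
      obtain ⟨c, hc⟩ := hw i hi
      refine (FractionalIdeal.mem_one_iff _).mpr ⟨χ c, ?_⟩
      rw [← IsScalarTower.algebraMap_apply R (Localization.AtPrime M) (FractionRing R) c, ← hc]
      congr 1
      exact (IsScalarTower.algebraMap_apply R (Localization.AtPrime M) (FractionRing R) i)
    · rw [map_zero, mul_zero]
      exact (FractionalIdeal.mem_one_iff _).mpr ⟨0, map_zero _⟩
    · intro u v _ _ hu hv
      obtain ⟨cu, hcu⟩ := (FractionalIdeal.mem_one_iff _).mp hu
      obtain ⟨cv, hcv⟩ := (FractionalIdeal.mem_one_iff _).mp hv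
      refine (FractionalIdeal.mem_one_iff _).mpr ⟨cu + cv, ?_⟩
      rw [map_add, hcu, hcv, map_add, mul_add]
    · intro z u _ hu
      obtain ⟨c', hc'⟩ := (FractionalIdeal.mem_one_iff _).mp hu
      refine (FractionalIdeal.mem_one_iff _).mpr ⟨z * c', ?_⟩
      rw [map_mul, hc', smul_eq_mul, map_mul]; ring
  exact key t ht

end FieldSide

section Main

variable (M : Ideal R) [hMp : M.IsPrime]

theorem M_ne_bot (hMnd : ¬ Divisorial R M) : M ≠ ⊥ := by
  rintro rfl
  apply hMnd
  unfold Divisorial divClos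
  rw [FractionalIdeal.coeIdeal_bot, FractionalIdeal.div_zero, FractionalIdeal.div_zero]

theorem oneDiv_coeIdeal_M (hMmax : M.IsMaximal) (hMnd : ¬ Divisorial R M) :
    (1 : FractionalIdeal R⁰ (FractionRing R)) / (M : FractionalIdeal R⁰ (FractionRing R)) = 1 := by
  set φ := algebraMap R (FractionRing R) with hφ
  have hM0 : M ≠ ⊥ := M_ne_bot M hMnd
  have hMK : (M : FractionalIdeal R⁰ (FractionRing R)) ≠ 0 :=
    FractionalIdeal.coeIdeal_ne_zero.mpr hM0
  have hge : (1 : FractionalIdeal R⁰ (FractionRing R)) ≤ 1 / M := by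
    rw [FractionalIdeal.le_div_iff_mul_le hMK, one_mul]
    exact FractionalIdeal.coeIdeal_le_one
  refine le_antisymm (le_of_mem_imp fun x hx => ?_) hge
  rw [FractionalIdeal.mem_div_iff_of_ne_zero hMK] at hx
  obtain ⟨⟨a, ⟨b, hb⟩⟩, hxeq⟩ := IsLocalization.mk'_surjective R⁰ x
  have hbne : b ≠ 0 := nonZeroDivisors.ne_zero hb
  have hb0 : φ b ≠ 0 := fun h0 => hbne (by
    apply IsFractionRing.injective R (FractionRing R); rw [map_zero]; exact h0)
  have e1 : x * φ b = φ a := by rw [← hxeq]; exact IsLocalization.mk'_spec _ a ⟨b, hb⟩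
  set D := (Ideal.span {b}).colon (Ideal.span {a}) with hD
  have hMD : M ≤ D := by
    intro m hm
    have hmem : x * φ m ∈ (1 : FractionalIdeal R⁰ (FractionRing R)) :=
      hx (φ m) ((FractionalIdeal.mem_coeIdeal _).mpr ⟨m, hm, rfl⟩)
    obtain ⟨r, hr⟩ := (FractionalIdeal.mem_one_iff _).mp hmem
    refine Ideal.mem_colon_span_singleton.mpr (Ideal.mem_span_singleton'.mpr ⟨r, ?_⟩)
    apply IsFractionRing.injective R (FractionRing R)
    show φ _ = φ _
    rw [map_mul, map_mul]
    linear_combination φ m * e1 + φ b * hr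
  by_cases h1D : (1 : R) ∈ D
  · obtain ⟨c, hc⟩ := Ideal.mem_span_singleton'.mp (Ideal.mem_colon_span_singleton.mp h1D)
    refine (FractionalIdeal.mem_one_iff _).mpr ⟨c, ?_⟩
    have hφc := congrArg φ hc
    rw [map_mul, map_mul, map_one, one_mul] at hφc
    apply mul_right_cancel₀ hb0
    linear_combination hφc - e1
  · exfalso
    have hDtop : D ≠ ⊤ := fun h => h1D (h ▸ Submodule.mem_top)
    obtain ⟨Mx, hMx, hDMx⟩ := Ideal.exists_le_maximal D hDtop
    have hMMx : M = Mx := hMmax.eq_of_le hMx.ne_top (le_trans hMD hDMx)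
    have hDM : D ≤ M := hMMx ▸ hDMx
    apply hMnd
    unfold Divisorial divClos
    have h1divne : (1 : FractionalIdeal R⁰ (FractionRing R)) / M ≠ 0 := by
      intro h0
      have h1mem : (1 : FractionRing R) ∈ (1 : FractionalIdeal R⁰ (FractionRing R)) / M := by
        rw [← FractionalIdeal.mem_coe]
        exact FractionalIdeal.coe_le_coe.mpr hge (FractionalIdeal.mem_coe.mpr (FractionalIdeal.one_mem_one _))
      rw [h0] at h1mem
      exact one_ne_zero ((FractionalIdeal.mem_zero_iff _).mp h1mem)
    have hxdiv : x ∈ (1 : FractionalIdeal R⁰ (FractionRing R)) / M := by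
      rw [FractionalIdeal.mem_div_iff_of_ne_zero hMK]
      intro v hv
      obtain ⟨m, hm, rfl⟩ := (FractionalIdeal.mem_coeIdeal _).mp hv
      obtain ⟨c, hc⟩ := Ideal.mem_span_singleton'.mp (Ideal.mem_colon_span_singleton.mp (hMD hm))
      refine (FractionalIdeal.mem_one_iff _).mpr ⟨c, ?_⟩
      have hφc := congrArg φ hc
      rw [map_mul, map_mul] at hφc
      apply mul_right_cancel₀ hb0
      -- φ c * φ b = x * φ m * φ b
      linear_combination hφc - φ m * e1
    refine le_antisymm (le_of_mem_imp fun y hy => ?_) ?_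
    · rw [FractionalIdeal.mem_div_iff_of_ne_zero h1divne] at hy
      have hy1 : y ∈ (1 : FractionalIdeal R⁰ (FractionRing R)) := by
        have := hy 1 ?_
        · simpa using this
        rw [← FractionalIdeal.mem_coe]
        exact FractionalIdeal.coe_le_coe.mpr hge (FractionalIdeal.mem_coe.mpr (FractionalIdeal.one_mem_one _))
      obtain ⟨r, hr⟩ := (FractionalIdeal.mem_one_iff _).mp hy1
      obtain ⟨c, hc⟩ := (FractionalIdeal.mem_one_iff _).mp (hy x hxdiv)
      refine (FractionalIdeal.mem_coeIdeal _).mpr ⟨r, hDM (Ideal.mem_colon_span_singleton.mpr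
        (Ideal.mem_span_singleton'.mpr ⟨c, ?_⟩)), hr⟩
      apply IsFractionRing.injective R (FractionRing R)
      show φ _ = φ _
      rw [map_mul, map_mul]
      -- φ c * φ b = φ r * φ a ; hc : φ c = y * x ; hr : φ r = y ; e1 : x * φ b = φ a
      linear_combination φ b * hc + y * e1 - φ a * hr
    · rw [FractionalIdeal.le_div_iff_mul_le h1divne]
      exact FractionalIdeal.mul_one_div_le_one

theorem divisorial_K (hH : HLocal R) (hMmax : M.IsMaximal) {I : Ideal R} (hI : I ≠ ⊥)
    (hId : Divisorial R I) :
    1 / (1 / ((I.map (algebraMap R (Localization.AtPrime M)) : Ideal (Localization.AtPrime M)) :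
        FractionalIdeal (Localization.AtPrime M)⁰ (FractionRing R))) =
      ((I.map (algebraMap R (Localization.AtPrime M)) : Ideal (Localization.AtPrime M)) :
        FractionalIdeal (Localization.AtPrime M)⁰ (FractionRing R)) := by
  set φ := algebraMap R (FractionRing R) with hφ
  set χ := algebraMap R (Localization.AtPrime M) with hχ
  set JI := ((I.map χ : Ideal (Localization.AtPrime M)) :
    FractionalIdeal (Localization.AtPrime M)⁰ (FractionRing R)) with hJIdef
  have hmapne : I.map χ ≠ ⊥ := by
    obtain ⟨i, hiI, hine⟩ := (Submodule.ne_bot_iff I).mp hI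
    refine (Submodule.ne_bot_iff _).mpr ⟨χ i, Ideal.mem_map_of_mem _ hiI, fun h0 => hine ?_⟩
    have hinj : Function.Injective χ :=
      IsLocalization.injective _ (Ideal.primeCompl_le_nonZeroDivisors M)
    exact hinj (by rw [h0, map_zero])
  have hJne : JI ≠ 0 := FractionalIdeal.coeIdeal_ne_zero.mpr hmapne
  have h1le : (1 : FractionalIdeal (Localization.AtPrime M)⁰ (FractionRing R)) ≤ 1 / JI := by
    rw [FractionalIdeal.le_div_iff_mul_le hJne, one_mul]
    exact FractionalIdeal.coeIdeal_le_one
  have hdivne : 1 / JI ≠ 0 := by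
    intro h0
    have h1mem : (1 : FractionRing R) ∈ 1 / JI := by
      rw [← FractionalIdeal.mem_coe]
      exact FractionalIdeal.coe_le_coe.mpr h1le (FractionalIdeal.mem_coe.mpr (FractionalIdeal.one_mem_one _))
    rw [h0] at h1mem
    exact one_ne_zero ((FractionalIdeal.mem_zero_iff _).mp h1mem)
  refine le_antisymm (le_of_mem_imp fun x hx => ?_) ?_
  swap
  · rw [FractionalIdeal.le_div_iff_mul_le hdivne]
    exact FractionalIdeal.mul_one_div_le_one
  rw [FractionalIdeal.mem_div_iff_of_ne_zero hdivne] at hx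
  have hIKne : (I : FractionalIdeal R⁰ (FractionRing R)) ≠ 0 :=
    FractionalIdeal.coeIdeal_ne_zero.mpr hI
  set B := (1 : FractionalIdeal R⁰ (FractionRing R)) / (I : FractionalIdeal R⁰ (FractionRing R))
    with hBdef
  have h1leB : (1 : FractionalIdeal R⁰ (FractionRing R)) ≤ B := by
    rw [hBdef, FractionalIdeal.le_div_iff_mul_le hIKne, one_mul]
    exact FractionalIdeal.coeIdeal_le_one
  have hBne : B ≠ 0 := by
    intro h0
    have h1mem : (1 : FractionRing R) ∈ B := by
      rw [← FractionalIdeal.mem_coe]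
      exact FractionalIdeal.coe_le_coe.mpr h1leB (FractionalIdeal.mem_coe.mpr (FractionalIdeal.one_mem_one _))
    rw [h0] at h1mem
    exact one_ne_zero ((FractionalIdeal.mem_zero_iff _).mp h1mem)
  have hBsub : ∀ w ∈ B, w ∈ (1 : FractionalIdeal (Localization.AtPrime M)⁰ (FractionRing R)) / JI := by
    intro w hw
    rw [FractionalIdeal.mem_div_iff_of_ne_zero hJne]
    intro y hy
    refine mul_coeIdeal_map_le_one M (I := I) ?_ hy
    intro i hi
    have hwi : w * φ i ∈ (1 : FractionalIdeal R⁰ (FractionRing R)) := by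
      rw [hBdef, FractionalIdeal.mem_div_iff_of_ne_zero hIKne] at hw
      exact hw (φ i) ((FractionalIdeal.mem_coeIdeal _).mpr ⟨i, hi, rfl⟩)
    obtain ⟨c, hc⟩ := (FractionalIdeal.mem_one_iff _).mp hwi
    exact ⟨c, hc.symm⟩
  set N := B.num with hNdef
  set d := B.den with hddef
  have hd0 : (d : R) ≠ 0 := nonZeroDivisors.ne_zero d.2
  have hdK : φ (d : R) ≠ 0 := fun h0 => hd0 (by
    apply IsFractionRing.injective R (FractionRing R); rw [map_zero]; exact h0)
  have hNne : N ≠ ⊥ := by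
    intro h0
    exact hBne (FractionalIdeal.num_eq_zero_iff.mp h0)
  have hdenw : ∀ w ∈ B, ∃ n ∈ N, φ n = φ (d : R) * w := by
    intro w hw
    have hmem : d • w ∈ d • (B : Submodule R (FractionRing R)) :=
      Submodule.smul_mem_pointwise_smul _ _ _ (FractionalIdeal.mem_coe.mpr hw)
    rw [FractionalIdeal.den_mul_self_eq_num] at hmem
    obtain ⟨n, hn, hne⟩ := Submodule.mem_map.mp hmem
    refine ⟨n, hn, ?_⟩
    rw [show (Algebra.linearMap R (FractionRing R)) n = φ n from rfl] at hne
    rw [hne, Submonoid.smul_def, Algebra.smul_def]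
  have hyp : ∀ n ∈ N, ∃ z : Localization.AtPrime M,
      algebraMap (Localization.AtPrime M) (FractionRing R) z =
        (x * (φ (d : R))⁻¹) * φ n := by
    intro n hn
    have hnK : φ n ∈ (N : FractionalIdeal R⁰ (FractionRing R)) :=
      (FractionalIdeal.mem_coeIdeal _).mpr ⟨n, hn, rfl⟩
    rw [← FractionalIdeal.den_mul_self_eq_num' (S := R⁰) (P := FractionRing R) B] at hnK
    obtain ⟨w, hwB, hwn⟩ := FractionalIdeal.mem_singleton_mul.mp hnK
    have hxw : x * w ∈ (1 : FractionalIdeal (Localization.AtPrime M)⁰ (FractionRing R)) :=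
      hx w (hBsub w hwB)
    obtain ⟨z, hz⟩ := (FractionalIdeal.mem_one_iff _).mp hxw
    refine ⟨z, ?_⟩
    have hwn' : φ n = φ (d : R) * w := hwn
    rw [hz, hwn']
    field_simp
  obtain ⟨s, hs, hall⟩ := L2K M hH hMmax (x * (φ (d : R))⁻¹) hyp
  -- hall : ∀ n ∈ N, ∃ c, φ s * (x * (φ d)⁻¹) * φ n = φ c
  have hsx : φ s * x ∈ (1 : FractionalIdeal R⁰ (FractionRing R)) / B := by
    rw [FractionalIdeal.mem_div_iff_of_ne_zero hBne]
    intro w hw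
    obtain ⟨n, hn, hne⟩ := hdenw w hw
    obtain ⟨c, hc⟩ := hall n hn
    refine (FractionalIdeal.mem_one_iff _).mpr ⟨c, ?_⟩
    rw [← hc, hne]
    field_simp
    ring
  have hId' : (1 : FractionalIdeal R⁰ (FractionRing R)) / B = (I : FractionalIdeal R⁰ (FractionRing R)) := hId
  rw [hId'] at hsx
  obtain ⟨i, hiI, hieq⟩ := (FractionalIdeal.mem_coeIdeal _).mp hsx
  exact mem_coeIdeal_map_of M hs hiI hieq.symm

theorem oneDiv_JM (hH : HLocal R) (hMmax : M.IsMaximal) (hMnd : ¬ Divisorial R M) :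
    1 / ((M.map (algebraMap R (Localization.AtPrime M)) : Ideal (Localization.AtPrime M)) :
        FractionalIdeal (Localization.AtPrime M)⁰ (FractionRing R)) = 1 := by
  set φ := algebraMap R (FractionRing R) with hφ
  set χ := algebraMap R (Localization.AtPrime M) with hχ
  have hM0 : M ≠ ⊥ := M_ne_bot M hMnd
  have hmapne : M.map χ ≠ ⊥ := by
    obtain ⟨m, hmI, hmne⟩ := (Submodule.ne_bot_iff M).mp hM0
    refine (Submodule.ne_bot_iff _).mpr ⟨χ m, Ideal.mem_map_of_mem _ hmI, fun h0 => hmne ?_⟩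
    have hinj : Function.Injective χ :=
      IsLocalization.injective _ (Ideal.primeCompl_le_nonZeroDivisors M)
    exact hinj (by rw [h0, map_zero])
  have hJne : ((M.map χ : Ideal (Localization.AtPrime M)) :
      FractionalIdeal (Localization.AtPrime M)⁰ (FractionRing R)) ≠ 0 :=
    FractionalIdeal.coeIdeal_ne_zero.mpr hmapne
  have h1le : (1 : FractionalIdeal (Localization.AtPrime M)⁰ (FractionRing R)) ≤
      1 / ((M.map χ : Ideal (Localization.AtPrime M)) :
        FractionalIdeal (Localization.AtPrime M)⁰ (FractionRing R)) := by
    rw [FractionalIdeal.le_div_iff_mul_le hJne, one_mul]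
    exact FractionalIdeal.coeIdeal_le_one
  refine le_antisymm (le_of_mem_imp fun z hz => ?_) h1le
  rw [FractionalIdeal.mem_div_iff_of_ne_zero hJne] at hz
  have hyp : ∀ m ∈ M, ∃ z' : Localization.AtPrime M,
      algebraMap (Localization.AtPrime M) (FractionRing R) z' = z * φ m := by
    intro m hm
    obtain ⟨u, hu⟩ := (FractionalIdeal.mem_one_iff _).mp (hz (φ m) (phi_mem_coeIdeal_map M hm))
    exact ⟨u, hu⟩
  obtain ⟨s, hs, hall⟩ := L2K M hH hMmax z hyp
  have hszMem : φ s * z ∈ (1 : FractionalIdeal R⁰ (FractionRing R)) /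
      (M : FractionalIdeal R⁰ (FractionRing R)) := by
    have hMK : (M : FractionalIdeal R⁰ (FractionRing R)) ≠ 0 :=
      FractionalIdeal.coeIdeal_ne_zero.mpr hM0
    rw [FractionalIdeal.mem_div_iff_of_ne_zero hMK]
    intro v hv
    obtain ⟨m, hm, rfl⟩ := (FractionalIdeal.mem_coeIdeal _).mp hv
    obtain ⟨c, hc⟩ := hall m hm
    exact (FractionalIdeal.mem_one_iff _).mpr ⟨c, hc.symm⟩
  rw [oneDiv_coeIdeal_M M hMmax hMnd] at hszMem
  obtain ⟨r, hr⟩ := (FractionalIdeal.mem_one_iff _).mp hszMem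
  obtain ⟨z', hz'⟩ := exists_psi_eq M hs hr.symm
  exact (FractionalIdeal.mem_one_iff _).mpr ⟨z', hz'⟩

theorem divisorial_loc_of_K (A : Ideal (Localization.AtPrime M))
    (h : 1 / (1 / (A : FractionalIdeal (Localization.AtPrime M)⁰ (FractionRing R))) =
      (A : FractionalIdeal (Localization.AtPrime M)⁰ (FractionRing R))) :
    Divisorial (Localization.AtPrime M) A := by
  letI : Algebra (Localization.AtPrime M) (FractionRing (Localization.AtPrime M)) :=
    OreLocalization.instAlgebra
  let e : FractionRing (Localization.AtPrime M) ≃ₐ[Localization.AtPrime M] FractionRing R :=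
    FractionRing.algEquiv (Localization.AtPrime M) (FractionRing R)
  show divClos (Localization.AtPrime M) A = _
  unfold divClos
  have h2 := congrArg (FractionalIdeal.map
    (e.symm : FractionRing R →ₐ[Localization.AtPrime M] FractionRing (Localization.AtPrime M))) h
  rw [FractionalIdeal.map_div, FractionalIdeal.map_div, FractionalIdeal.map_one,
    FractionalIdeal.map_coeIdeal] at h2
  exact h2

end Main

end Stmt3Aux

/-- In an h-local Prüfer domain, if `I` is a nonzero divisorial ideal and `M` a nondivisorial
maximal ideal containing `I`, then `I R_M` is divisorial in `R_M` and `I R_M < M R_M`. -/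
theorem stmt3 (hR : IsPruferDomain R) (hH : HLocal R)
    (I : Ideal R) (hI : I ≠ ⊥) (hId : Divisorial R I)
    (M : Ideal R) (hM : M.IsMaximal) (hMnd : ¬ Divisorial R M) (hIM : I ≤ M) :
    DivisorialAt R M hM.isPrime I ∧
      MapAt R M hM.isPrime I < MapAt R M hM.isPrime M := by
  classical
  haveI hMp : M.IsPrime := hM.isPrime
  have hdivK := Stmt3Aux.divisorial_K M hH hM hI hId
  have hdiv : DivisorialAt R M hM.isPrime I :=
    Stmt3Aux.divisorial_loc_of_K M (I.map (algebraMap R (Localization.AtPrime M))) hdivK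
  refine ⟨hdiv, lt_of_le_of_ne (Ideal.map_mono hIM) fun heq => ?_⟩
  have heq' : I.map (algebraMap R (Localization.AtPrime M)) =
      M.map (algebraMap R (Localization.AtPrime M)) := heq
  rw [heq'] at hdivK
  rw [Stmt3Aux.oneDiv_JM M hH hM hMnd, FractionalIdeal.div_one] at hdivK
  -- hdivK : 1 = coeIdeal (M.map χ)
  have h1mem : (1 : FractionRing R) ∈
      ((M.map (algebraMap R (Localization.AtPrime M)) : Ideal (Localization.AtPrime M)) :
        FractionalIdeal (Localization.AtPrime M)⁰ (FractionRing R)) := by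
    rw [← hdivK]; exact FractionalIdeal.one_mem_one _
  obtain ⟨t, htmem, hteq⟩ := (FractionalIdeal.mem_coeIdeal _).mp h1mem
  have ht1 : t = 1 := IsFractionRing.injective (Localization.AtPrime M) (FractionRing R)
    (by rw [hteq, map_one])
  rw [ht1] at htmem
  have htop : M.map (algebraMap R (Localization.AtPrime M)) = ⊤ :=
    (Ideal.eq_top_iff_one _).mpr htmem
  rw [Localization.AtPrime.map_eq_maximalIdeal] at htop
  exact (IsLocalRing.maximalIdeal.isMaximal _).ne_top htop
end
end

section
/- Let R be an h-local Prüfer domain. Then for every nonzero ideal A of R and every maximal ideal M of R, (A R_M)^{-1} = A^{-1} R_M and (A R_M)^v = A^v R_M. -/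
open scoped nonZeroDivisors

noncomputable section

variable (R : Type*) [CommRing R] [IsDomain R]

section ProofAux



variable {R}

/-- In the localization of a Prüfer domain at a prime, images of ring elements are
totally ordered by divisibility. -/
lemma div_total (hR : IsPruferDomain R) (N : Ideal R) [hN : N.IsPrime] (p q : R) :
    algebraMap R (Localization.AtPrime N) p ∣ algebraMap R (Localization.AtPrime N) q ∨
      algebraMap R (Localization.AtPrime N) q ∣ algebraMap R (Localization.AtPrime N) p := by
  by_cases hp : p = 0
  · right; rw [hp, map_zero]; exact dvd_zero _
  by_cases hq : q = 0
  · left; rw [hq, map_zero]; exact dvd_zero _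
  set F := FractionRing R
  have hIbot : Ideal.span {p, q} ≠ (⊥ : Ideal R) := by
    intro h
    exact hp (Ideal.span_eq_bot.mp h p (by simp))
  have hIfg : (Ideal.span {p, q} : Ideal R).FG := Submodule.fg_span (Set.toFinite _)
  obtain ⟨J, hJ1, hJ2⟩ := isUnit_iff_exists.mp (hR _ hIbot hIfg)
  have h1 : (1 : F) ∈ ((Ideal.span {p, q} : Ideal R) : FractionalIdeal R⁰ F) * J := by
    rw [hJ1]; exact FractionalIdeal.one_mem_one _
  have h2 : ∃ u w, u ∈ J ∧ w ∈ J ∧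
      (1 : F) = algebraMap R F p * u + algebraMap R F q * w := by
    refine FractionalIdeal.mul_induction_on h1 ?_ ?_
    · intro i hi j hj
      rw [FractionalIdeal.mem_coeIdeal] at hi
      obtain ⟨a, ha, rfl⟩ := hi
      obtain ⟨c, d, hcd⟩ := Ideal.mem_span_pair.mp ha
      have hc' : algebraMap R F c * j ∈ J := by
        have := Submodule.smul_mem (J : Submodule R F) c (FractionalIdeal.mem_coe.mpr hj)
        rw [Algebra.smul_def] at this
        exact FractionalIdeal.mem_coe.mp this
      have hd' : algebraMap R F d * j ∈ J := by
        have := Submodule.smul_mem (J : Submodule R F) d (FractionalIdeal.mem_coe.mpr hj)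
        rw [Algebra.smul_def] at this
        exact FractionalIdeal.mem_coe.mp this
      refine ⟨algebraMap R F c * j, algebraMap R F d * j, hc', hd', ?_⟩
      have h3 : algebraMap R F c * algebraMap R F p + algebraMap R F d * algebraMap R F q =
          algebraMap R F a := by rw [← map_mul, ← map_mul, ← map_add, hcd]
      linear_combination (- j) * h3
    · rintro x y ⟨u1, w1, hu1, hw1, rfl⟩ ⟨u2, w2, hu2, hw2, rfl⟩
      refine ⟨u1 + u2, w1 + w2, ?_, ?_, by ring⟩
      · exact FractionalIdeal.mem_coe.mp (Submodule.add_mem (J : Submodule R F)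
          (FractionalIdeal.mem_coe.mpr hu1) (FractionalIdeal.mem_coe.mpr hu2))
      · exact FractionalIdeal.mem_coe.mp (Submodule.add_mem (J : Submodule R F)
          (FractionalIdeal.mem_coe.mpr hw1) (FractionalIdeal.mem_coe.mpr hw2))
  obtain ⟨u, w, huJ, hwJ, h1eq⟩ := h2
  have hpI : algebraMap R F p ∈ ((Ideal.span {p, q} : Ideal R) : FractionalIdeal R⁰ F) :=
    (FractionalIdeal.mem_coeIdeal _).mpr ⟨p, Ideal.subset_span (by simp), rfl⟩
  have hqI : algebraMap R F q ∈ ((Ideal.span {p, q} : Ideal R) : FractionalIdeal R⁰ F) :=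
    (FractionalIdeal.mem_coeIdeal _).mpr ⟨q, Ideal.subset_span (by simp), rfl⟩
  have memone : ∀ z : F, z ∈ ((Ideal.span {p, q} : Ideal R) : FractionalIdeal R⁰ F) →
      ∀ v ∈ J, ∃ r : R, algebraMap R F r = z * v := by
    intro z hz v hv
    have h4 := FractionalIdeal.mul_mem_mul hz hv
    rw [hJ1, FractionalIdeal.mem_one_iff] at h4
    exact h4
  obtain ⟨e, he⟩ := memone _ hpI u huJ
  obtain ⟨f, hf⟩ := memone _ hqI w hwJ
  obtain ⟨g, hg⟩ := memone _ hqI u huJ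
  obtain ⟨h', hh⟩ := memone _ hpI w hwJ
  have injF : Function.Injective (algebraMap R F) := IsFractionRing.injective R F
  have hef : e + f = 1 := by
    apply injF; rw [map_add, he, hf, map_one, ← h1eq]
  have hpg : p * g = q * e := by
    apply injF; rw [map_mul, map_mul, hg, he]; ring
  have hqh : q * h' = p * f := by
    apply injF; rw [map_mul, map_mul, hh, hf]; ring
  have hef' : e ∉ N ∨ f ∉ N := by
    by_contra hc
    push_neg at hc
    exact hN.ne_top ((Ideal.eq_top_iff_one N).mpr (hef ▸ N.add_mem hc.1 hc.2))
  rcases hef' with he' | hf'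
  · left
    obtain ⟨v, hv⟩ := IsLocalization.map_units (Localization.AtPrime N) (⟨e, he'⟩ : N.primeCompl)
    refine ⟨algebraMap R (Localization.AtPrime N) g * ↑v⁻¹, ?_⟩
    have h4 : algebraMap R (Localization.AtPrime N) p * algebraMap R (Localization.AtPrime N) g =
        algebraMap R (Localization.AtPrime N) q * ↑v := by
      rw [hv, ← map_mul, ← map_mul, hpg]
    calc algebraMap R (Localization.AtPrime N) q
        = algebraMap R (Localization.AtPrime N) q * (↑v * ↑v⁻¹) := by
          rw [Units.mul_inv, mul_one]
      _ = algebraMap R (Localization.AtPrime N) p *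
            (algebraMap R (Localization.AtPrime N) g * ↑v⁻¹) := by
          rw [← mul_assoc, ← h4]; ring
  · right
    obtain ⟨v, hv⟩ := IsLocalization.map_units (Localization.AtPrime N) (⟨f, hf'⟩ : N.primeCompl)
    refine ⟨algebraMap R (Localization.AtPrime N) h' * ↑v⁻¹, ?_⟩
    have h4 : algebraMap R (Localization.AtPrime N) q * algebraMap R (Localization.AtPrime N) h' =
        algebraMap R (Localization.AtPrime N) p * ↑v := by
      rw [hv, ← map_mul, ← map_mul, hqh]
    calc algebraMap R (Localization.AtPrime N) p
        = algebraMap R (Localization.AtPrime N) p * (↑v * ↑v⁻¹) := by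
          rw [Units.mul_inv, mul_one]
      _ = algebraMap R (Localization.AtPrime N) q *
            (algebraMap R (Localization.AtPrime N) h' * ↑v⁻¹) := by
          rw [← mul_assoc, ← h4]; ring

/-- Key h-local lemma: for distinct maximal ideals `M ≠ N` and `0 ≠ b ∈ N`,
there are `s ∉ M`, `t ∉ N` with `s * t = b * c`. -/
lemma star_lemma (hR : IsPruferDomain R) (hH : HLocal R) {M N : Ideal R} (hM : M.IsMaximal)
    (hN : N.IsMaximal) (hMN : M ≠ N) {b : R} (hbN : b ∈ N) (hb0 : b ≠ 0) :
    ∃ s t c : R, s ∉ M ∧ t ∉ N ∧ s * t = b * c := by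
  haveI hNp : N.IsPrime := hN.isPrime
  set A := Localization.AtPrime N with hA
  set f := algebraMap R A with hf
  set P : Ideal R := (Ideal.span {f b}).radical.comap f with hP
  have hmem : ∀ r : R, r ∈ P ↔ ∃ n : ℕ, f b ∣ f r ^ n := by
    intro r
    rw [hP, Ideal.mem_comap, Ideal.mem_radical_iff]
    exact exists_congr fun n => Ideal.mem_span_singleton
  have hbP : b ∈ P := (hmem b).mpr ⟨1, by simp⟩
  have hP0 : P ≠ ⊥ := by
    intro h
    rw [h] at hbP
    exact hb0 (by simpa using hbP)
  have hPN : P ≤ N := by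
    intro r hr
    by_contra hrN
    obtain ⟨n, hn⟩ := (hmem r).mp hr
    have hu : IsUnit (f r) := (IsLocalization.AtPrime.isUnit_to_map_iff A N r).mpr hrN
    have hub : IsUnit (f b) := isUnit_of_dvd_unit hn (hu.pow n)
    exact (IsLocalization.AtPrime.isUnit_to_map_iff A N b).mp hub hbN
  have hprime : P.IsPrime := by
    constructor
    · intro h
      exact hN.ne_top (top_le_iff.mp (h ▸ hPN))
    · intro x y hxy
      obtain ⟨n, hn⟩ := (hmem (x * y)).mp hxy
      rw [map_mul, mul_pow] at hn
      rcases div_total hR N (x ^ n) (y ^ n) with h | h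
      · right
        refine (hmem y).mpr ⟨2 * n, ?_⟩
        refine hn.trans ?_
        rw [two_mul, pow_add]
        rw [map_pow, map_pow] at h
        exact mul_dvd_mul h dvd_rfl
      · left
        refine (hmem x).mpr ⟨2 * n, ?_⟩
        refine hn.trans ?_
        rw [two_mul, pow_add]
        rw [map_pow, map_pow] at h
        exact mul_dvd_mul dvd_rfl h
  obtain ⟨M', hM'⟩ := hH.2 P hprime hP0
  have hPnM : ¬ P ≤ M := by
    intro h
    exact hMN ((hM'.2 M ⟨hM, h⟩).trans (hM'.2 N ⟨hN, hPN⟩).symm)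
  obtain ⟨t0, ht0P, ht0M⟩ := SetLike.not_le_iff_exists.mp hPnM
  obtain ⟨n, z, hz⟩ := (hmem t0).mp ht0P
  obtain ⟨⟨c0, u⟩, hzu⟩ := IsLocalization.surj N.primeCompl z
  have key : f (t0 ^ n * ↑u) = f (b * c0) := by
    rw [map_mul, map_mul, map_pow, hz, mul_assoc, hzu]
  obtain ⟨w, hw⟩ := (IsLocalization.eq_iff_exists N.primeCompl A).mp key
  refine ⟨t0 ^ n, ↑w * ↑u, ↑w * c0, ?_, ?_, ?_⟩
  · exact fun h => ht0M (hM.isPrime.mem_of_pow_mem n h)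
  · exact N.primeCompl.mul_mem w.2 u.2
  · linear_combination hw

/-- `R = ⋂ R_N` over maximal ideals `N`, in the denominator-ideal form. -/
lemma mem_range_of_all {K : Type*} [Field K] [Algebra R K] [IsFractionRing R K] (y : K)
    (h : ∀ N : Ideal R, N.IsMaximal →
      ∃ t r : R, t ∉ N ∧ algebraMap R K t * y = algebraMap R K r) :
    ∃ r : R, algebraMap R K r = y := by
  set D : Ideal R :=
    { carrier := {t : R | ∃ r : R, algebraMap R K t * y = algebraMap R K r}
      add_mem' := by
        rintro a b ⟨r1, h1⟩ ⟨r2, h2⟩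
        exact ⟨r1 + r2, by rw [map_add, map_add, add_mul, h1, h2]⟩
      zero_mem' := ⟨0, by simp⟩
      smul_mem' := by
        rintro c a ⟨r, h1⟩
        exact ⟨c * r, by rw [smul_eq_mul, map_mul, map_mul, mul_assoc, h1]⟩ } with hD
  by_cases hT : D = ⊤
  · have h1 : (1 : R) ∈ D := hT ▸ Submodule.mem_top
    obtain ⟨r, hr⟩ := h1
    rw [map_one, one_mul] at hr
    exact ⟨r, hr.symm⟩
  · obtain ⟨N, hNmax, hDN⟩ := Ideal.exists_le_maximal D hT
    obtain ⟨t, r, htN, htr⟩ := h N hNmax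
    exact absurd (hDN (show t ∈ D from ⟨r, htr⟩)) htN

lemma one_div_spanSingleton_mul_s5 {R₁ : Type*} [CommRing R₁] [IsDomain R₁] {K : Type*} [Field K]
    [Algebra R₁ K] [IsFractionRing R₁ K] (y : K) (hy : y ≠ 0)
    (J : FractionalIdeal R₁⁰ K) (hJ : J ≠ 0) :
    1 / (FractionalIdeal.spanSingleton R₁⁰ y * J) =
      FractionalIdeal.spanSingleton R₁⁰ y⁻¹ * (1 / J) := by
  have hP : FractionalIdeal.spanSingleton R₁⁰ y * J ≠ 0 := by
    intro h
    apply hJ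
    have h2 : FractionalIdeal.spanSingleton R₁⁰ y⁻¹ *
        (FractionalIdeal.spanSingleton R₁⁰ y * J) = J := by
      rw [← mul_assoc, FractionalIdeal.spanSingleton_mul_spanSingleton,
        inv_mul_cancel₀ hy, FractionalIdeal.spanSingleton_one, one_mul]
    rw [← h2, h, mul_zero]
  ext x
  rw [FractionalIdeal.mem_div_iff_of_ne_zero hP, FractionalIdeal.mem_singleton_mul]
  constructor
  · intro h
    refine ⟨y * x, ?_, by rw [← mul_assoc, inv_mul_cancel₀ hy, one_mul]⟩
    rw [FractionalIdeal.mem_div_iff_of_ne_zero hJ]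
    intro z hz
    have h3 := h (y * z) (FractionalIdeal.mem_singleton_mul.mpr ⟨z, hz, rfl⟩)
    rwa [show y * x * z = x * (y * z) by ring]
  · rintro ⟨w, hw, rfl⟩
    intro z hz
    obtain ⟨z', hz', rfl⟩ := FractionalIdeal.mem_singleton_mul.mp hz
    rw [FractionalIdeal.mem_div_iff_of_ne_zero hJ] at hw
    have h3 := hw z' hz'
    rwa [show y⁻¹ * w * (y * z') = y⁻¹ * y * (w * z') by ring, inv_mul_cancel₀ hy, one_mul]

lemma singleton_mul_eq_map {R₁ : Type*} [CommRing R₁] {K : Type*} [Field K]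
    [Algebra R₁ K] [IsFractionRing R₁ K] (c : K) (I : FractionalIdeal R₁⁰ K) :
    ((FractionalIdeal.spanSingleton R₁⁰ c * I : FractionalIdeal R₁⁰ K) : Submodule R₁ K) =
      Submodule.map (LinearMap.mulLeft R₁ c) (I : Submodule R₁ K) := by
  apply Submodule.ext
  intro x
  rw [Submodule.mem_map, FractionalIdeal.mem_coe, FractionalIdeal.mem_singleton_mul]
  constructor
  · rintro ⟨z, hz, hxz⟩
    exact ⟨z, FractionalIdeal.mem_coe.mpr hz,
      by rw [LinearMap.mulLeft_apply, ← hxz]⟩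
  · rintro ⟨z, hz, hzx⟩
    exact ⟨z, FractionalIdeal.mem_coe.mp hz,
      by rw [← hzx, LinearMap.mulLeft_apply]⟩

lemma span_coeIdeal_eq (K : Type*) [Field K] [Algebra R K] [IsFractionRing R K]
    (M : Ideal R) (hM : M.IsMaximal)
    [Algebra (LocAt R M hM.isPrime) K] [IsScalarTower R (LocAt R M hM.isPrime) K]
    [IsFractionRing (LocAt R M hM.isPrime) K] (B : Ideal R) :
    Submodule.span (LocAt R M hM.isPrime)
        (((B : FractionalIdeal R⁰ K) : Submodule R K) : Set K) =
      ((MapAt R M hM.isPrime B : FractionalIdeal (LocAt R M hM.isPrime)⁰ K) :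
        Submodule (LocAt R M hM.isPrime) K) := by
  haveI := hM.isPrime
  have tow : ∀ r : R, algebraMap (LocAt R M hM.isPrime) K (algebraMap R (LocAt R M hM.isPrime) r)
      = algebraMap R K r := fun r => (IsScalarTower.algebraMap_apply R _ K r).symm
  apply le_antisymm
  · rw [Submodule.span_le]
    intro u hu
    have hu' : u ∈ (B : FractionalIdeal R⁰ K) := hu
    rw [FractionalIdeal.mem_coeIdeal] at hu'
    obtain ⟨a, ha, rfl⟩ := hu'
    exact ((FractionalIdeal.mem_coeIdeal _).mpr
      ⟨algebraMap R (LocAt R M hM.isPrime) a, Ideal.mem_map_of_mem _ ha, tow a⟩ :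
      algebraMap R K a ∈ (MapAt R M hM.isPrime B : FractionalIdeal (LocAt R M hM.isPrime)⁰ K))
  · intro u hu
    obtain ⟨m, hm, rfl⟩ := (FractionalIdeal.mem_coeIdeal _).mp hu
    clear hu
    have hm' : m ∈ Submodule.span (LocAt R M hM.isPrime)
        ((algebraMap R (LocAt R M hM.isPrime)) '' (B : Set R)) := hm
    clear hm
    induction hm' using Submodule.span_induction with
    | mem z hz =>
      obtain ⟨a, ha, rfl⟩ := hz
      rw [tow a]
      exact Submodule.subset_span
        (((FractionalIdeal.mem_coeIdeal _).mpr ⟨a, ha, rfl⟩ :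
          algebraMap R K a ∈ (B : FractionalIdeal R⁰ K)))
    | zero => rw [map_zero]; exact Submodule.zero_mem _
    | add w v _ _ ihw ihv => rw [map_add]; exact Submodule.add_mem _ ihw ihv
    | smul l z _ ihz =>
      rw [smul_eq_mul, map_mul, ← Algebra.smul_def]
      exact Submodule.smul_mem _ l ihz

lemma inv_localize (hR : IsPruferDomain R) (hH : HLocal R)
    (K : Type*) [Field K] [Algebra R K] [IsFractionRing R K]
    (M : Ideal R) (hM : M.IsMaximal)
    [Algebra (LocAt R M hM.isPrime) K] [IsScalarTower R (LocAt R M hM.isPrime) K]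
    [IsFractionRing (LocAt R M hM.isPrime) K] (B : Ideal R) (hB : B ≠ ⊥) :
    (((1 / (MapAt R M hM.isPrime B : FractionalIdeal (LocAt R M hM.isPrime)⁰ K)) :
        FractionalIdeal (LocAt R M hM.isPrime)⁰ K) : Submodule (LocAt R M hM.isPrime) K) =
      Submodule.span (LocAt R M hM.isPrime)
        (((1 / (B : FractionalIdeal R⁰ K) : FractionalIdeal R⁰ K) : Submodule R K) : Set K) := by
  haveI := hM.isPrime
  haveI : IsDomain (LocAt R M hM.isPrime) :=
    IsLocalization.isDomain_localization M.primeCompl_le_nonZeroDivisors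
  have injRL : Function.Injective (algebraMap R (LocAt R M hM.isPrime)) :=
    IsLocalization.injective _ M.primeCompl_le_nonZeroDivisors
  have hMapne : MapAt R M hM.isPrime B ≠ ⊥ := by
    rw [MapAt, Ne, Ideal.map_eq_bot_iff_of_injective injRL]
    exact hB
  have hne1 : (MapAt R M hM.isPrime B : FractionalIdeal (LocAt R M hM.isPrime)⁰ K) ≠ 0 :=
    FractionalIdeal.coeIdeal_ne_zero.mpr hMapne
  have hne2 : (B : FractionalIdeal R⁰ K) ≠ 0 := FractionalIdeal.coeIdeal_ne_zero.mpr hB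
  have tow : ∀ r : R, algebraMap (LocAt R M hM.isPrime) K (algebraMap R (LocAt R M hM.isPrime) r)
      = algebraMap R K r := fun r => (IsScalarTower.algebraMap_apply R _ K r).symm
  apply le_antisymm
  · intro x hx
    replace hx := (FractionalIdeal.mem_div_iff_of_ne_zero hne1).mp hx
    have hxa : ∀ a ∈ B, ∃ l : LocAt R M hM.isPrime,
        algebraMap (LocAt R M hM.isPrime) K l = x * algebraMap R K a := by
      intro a ha
      have h2 : algebraMap (LocAt R M hM.isPrime) K (algebraMap R (LocAt R M hM.isPrime) a) ∈
          (MapAt R M hM.isPrime B : FractionalIdeal (LocAt R M hM.isPrime)⁰ K) :=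
        (FractionalIdeal.mem_coeIdeal _).mpr ⟨_, Ideal.mem_map_of_mem _ ha, rfl⟩
      have h3 := hx _ h2
      rw [FractionalIdeal.mem_one_iff] at h3
      obtain ⟨l, hl⟩ := h3
      rw [tow a] at hl
      exact ⟨l, hl⟩
    by_cases hx0 : x = 0
    · rw [hx0]; exact Submodule.zero_mem _
    obtain ⟨⟨a, b0⟩, hab⟩ := IsLocalization.surj R⁰ x
    have hb0 : (b0 : R) ≠ 0 := nonZeroDivisors.ne_zero b0.2
    classical
    set Fs := (hH.1 (b0 : R) hb0).toFinset with hFs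
    set F' := Fs.erase M with hF'
    have hstar : ∀ N ∈ F', ∃ s t c : R, s ∉ M ∧ t ∉ N ∧ s * t = (b0 : R) * c := by
      intro N hN
      obtain ⟨hNM, hNF⟩ := Finset.mem_erase.mp hN
      rw [hFs, Set.Finite.mem_toFinset] at hNF
      exact star_lemma hR hH hM hNF.1 (Ne.symm hNM) hNF.2 hb0
    choose! sf tf cf hsf htf heqf using hstar
    have hsM : (∏ N ∈ F', sf N) ∉ M := by
      intro h
      obtain ⟨N, hNF, hNs⟩ := Ideal.IsPrime.prod_mem_iff.mp h
      exact hsf N hNF hNs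
    have key : ∀ a' ∈ B, ∃ r : R,
        algebraMap R K r = algebraMap R K (∏ N ∈ F', sf N) * x * algebraMap R K a' := by
      intro a' ha'
      refine mem_range_of_all (algebraMap R K (∏ N ∈ F', sf N) * x * algebraMap R K a') ?_
      intro N hNmax
      by_cases hbN : (b0 : R) ∈ N
      · by_cases hNM : N = M
        · obtain ⟨l, hl⟩ := hxa a' ha'
          obtain ⟨⟨r, t⟩, hrt⟩ := IsLocalization.surj M.primeCompl l
          refine ⟨(t : R), (∏ N' ∈ F', sf N') * r, by rw [hNM]; exact t.2, ?_⟩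
          have h5 : algebraMap R K (t : R) * (x * algebraMap R K a') = algebraMap R K r := by
            rw [← hl, ← tow (t : R), ← tow r, ← map_mul,
              mul_comm (algebraMap R (LocAt R M hM.isPrime) (t : R)) l, hrt]
          rw [map_mul]
          linear_combination algebraMap R K (∏ N' ∈ F', sf N') * h5
        · have hNF' : N ∈ F' := by
            rw [hF', Finset.mem_erase, hFs, Set.Finite.mem_toFinset]
            exact ⟨hNM, hNmax, hbN⟩
          refine ⟨tf N, (∏ N' ∈ F'.erase N, sf N') * (cf N * (a * a')), htf N hNF', ?_⟩
          rw [← Finset.mul_prod_erase F' sf hNF']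
          have h1 : algebraMap R K (sf N) * algebraMap R K (tf N) =
              algebraMap R K (b0 : R) * algebraMap R K (cf N) := by
            rw [← map_mul, ← map_mul, heqf N hNF']
          have h2 : algebraMap R K (b0 : R) * x = algebraMap R K a := by
            rw [mul_comm]; exact hab
          simp only [map_mul]
          linear_combination (algebraMap R K (∏ N' ∈ F'.erase N, sf N') * x *
              algebraMap R K a') * h1 +
            (algebraMap R K (∏ N' ∈ F'.erase N, sf N') * algebraMap R K (cf N) *
              algebraMap R K a') * h2
      · refine ⟨(b0 : R), (∏ N' ∈ F', sf N') * (a * a'), hbN, ?_⟩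
        simp only [map_mul]
        linear_combination (algebraMap R K (∏ N' ∈ F', sf N') * algebraMap R K a') * hab
    have hq : algebraMap R K (∏ N ∈ F', sf N) * x ∈
        (1 / (B : FractionalIdeal R⁰ K) : FractionalIdeal R⁰ K) := by
      rw [FractionalIdeal.mem_div_iff_of_ne_zero hne2]
      intro y hy
      rw [FractionalIdeal.mem_coeIdeal] at hy
      obtain ⟨a', ha', rfl⟩ := hy
      obtain ⟨r, hr⟩ := key a' ha'
      rw [FractionalIdeal.mem_one_iff]
      exact ⟨r, by rw [hr]⟩
    have hfin : x = (IsLocalization.mk' (LocAt R M hM.isPrime) 1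
        (⟨∏ N ∈ F', sf N, hsM⟩ : M.primeCompl)) • (algebraMap R K (∏ N ∈ F', sf N) * x) := by
      rw [Algebra.smul_def]
      have h6 : algebraMap (LocAt R M hM.isPrime) K (IsLocalization.mk' _ 1
          (⟨∏ N ∈ F', sf N, hsM⟩ : M.primeCompl)) * algebraMap R K (∏ N ∈ F', sf N) = 1 := by
        rw [← tow (∏ N ∈ F', sf N), ← map_mul, IsLocalization.mk'_spec, map_one, map_one]
      rw [← mul_assoc, h6, one_mul]
    rw [hfin]
    exact Submodule.smul_mem _ _ (Submodule.subset_span (FractionalIdeal.mem_coe.mpr hq))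
  · rw [Submodule.span_le]
    intro u hu
    have hu' : u ∈ (1 / (B : FractionalIdeal R⁰ K) : FractionalIdeal R⁰ K) := hu
    replace hu' := (FractionalIdeal.mem_div_iff_of_ne_zero hne2).mp hu'
    show u ∈ 1 / (MapAt R M hM.isPrime B : FractionalIdeal (LocAt R M hM.isPrime)⁰ K)
    rw [FractionalIdeal.mem_div_iff_of_ne_zero hne1]
    intro y hy
    obtain ⟨m, hm, rfl⟩ := (FractionalIdeal.mem_coeIdeal _).mp hy
    clear hy
    have hm' : m ∈ Submodule.span (LocAt R M hM.isPrime)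
        ((algebraMap R (LocAt R M hM.isPrime)) '' (B : Set R)) := hm
    clear hm
    induction hm' using Submodule.span_induction with
    | mem z hz =>
      obtain ⟨a, ha, rfl⟩ := hz
      rw [tow a]
      have h7 := hu' (algebraMap R K a) ((FractionalIdeal.mem_coeIdeal _).mpr ⟨a, ha, rfl⟩)
      rw [FractionalIdeal.mem_one_iff] at h7
      obtain ⟨r, hr⟩ := h7
      rw [FractionalIdeal.mem_one_iff]
      exact ⟨algebraMap R (LocAt R M hM.isPrime) r, by rw [tow r, hr]⟩
    | zero => rw [map_zero, mul_zero]; exact Submodule.zero_mem _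
    | add w v _ _ ihw ihv => rw [map_add, mul_add]; exact Submodule.add_mem _ ihw ihv
    | smul l z _ ihz =>
      have h8 : u * algebraMap (LocAt R M hM.isPrime) K (l • z) =
          l • (u * algebraMap (LocAt R M hM.isPrime) K z) := by
        rw [smul_eq_mul, map_mul, Algebra.smul_def]; ring
      rw [h8]
      exact Submodule.smul_mem ((1 : FractionalIdeal (LocAt R M hM.isPrime)⁰ K) :
        Submodule (LocAt R M hM.isPrime) K) l ihz

end ProofAux

/-- In an h-local Prüfer domain, `(A R_M)⁻¹ = A⁻¹ R_M` and `(A R_M)^v = A^v R_M` for every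
nonzero ideal `A` and maximal ideal `M` (all computed inside the common quotient field `K`). -/
theorem stmt5 (hR : IsPruferDomain R) (hH : HLocal R)
    (K : Type*) [Field K] [Algebra R K] [IsFractionRing R K]
    (A : Ideal R) (hA : A ≠ ⊥) (M : Ideal R) (hM : M.IsMaximal)
    [Algebra (LocAt R M hM.isPrime) K] [IsScalarTower R (LocAt R M hM.isPrime) K]
    [IsFractionRing (LocAt R M hM.isPrime) K] :
    (((1 / (MapAt R M hM.isPrime A : FractionalIdeal (LocAt R M hM.isPrime)⁰ K)) :
        FractionalIdeal (LocAt R M hM.isPrime)⁰ K) : Submodule (LocAt R M hM.isPrime) K) =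
      Submodule.span (LocAt R M hM.isPrime)
        (((1 / (A : FractionalIdeal R⁰ K) : FractionalIdeal R⁰ K) :
          Submodule R K) : Set K) ∧
    (((1 / (1 / (MapAt R M hM.isPrime A : FractionalIdeal (LocAt R M hM.isPrime)⁰ K))) :
        FractionalIdeal (LocAt R M hM.isPrime)⁰ K) : Submodule (LocAt R M hM.isPrime) K) =
      Submodule.span (LocAt R M hM.isPrime)
        (((1 / (1 / (A : FractionalIdeal R⁰ K)) : FractionalIdeal R⁰ K) :
          Submodule R K) : Set K) := by
  haveI := hM.isPrime
  haveI : IsDomain (LocAt R M hM.isPrime) :=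
    IsLocalization.isDomain_localization M.primeCompl_le_nonZeroDivisors
  have injRL : Function.Injective (algebraMap R (LocAt R M hM.isPrime)) :=
    IsLocalization.injective _ M.primeCompl_le_nonZeroDivisors
  have part1 := inv_localize hR hH K M hM A hA
  refine ⟨part1, ?_⟩
  obtain ⟨d, B, hd0, hinvA⟩ :=
    FractionalIdeal.exists_eq_spanSingleton_mul (1 / (A : FractionalIdeal R⁰ K))
  have hne2 : (A : FractionalIdeal R⁰ K) ≠ 0 := FractionalIdeal.coeIdeal_ne_zero.mpr hA
  have he : algebraMap R K d ≠ 0 := fun h =>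
    hd0 (IsFractionRing.injective R K (by rw [h, map_zero]))
  have hinvA_ne : (1 / (A : FractionalIdeal R⁰ K)) ≠ 0 := by
    intro h
    have h1 : (1 : K) ∈ (1 / (A : FractionalIdeal R⁰ K) : FractionalIdeal R⁰ K) := by
      rw [FractionalIdeal.mem_div_iff_of_ne_zero hne2]
      intro y hy
      obtain ⟨a', _, rfl⟩ := (FractionalIdeal.mem_coeIdeal _).mp hy
      rw [one_mul, FractionalIdeal.mem_one_iff]
      exact ⟨a', rfl⟩
    rw [h, FractionalIdeal.mem_zero_iff] at h1
    exact one_ne_zero h1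
  have hB0 : B ≠ ⊥ := by
    intro h
    apply hinvA_ne
    rw [hinvA, h, FractionalIdeal.coeIdeal_bot, mul_zero]
  have hBne : (B : FractionalIdeal R⁰ K) ≠ 0 := FractionalIdeal.coeIdeal_ne_zero.mpr hB0
  have hMapBne : (MapAt R M hM.isPrime B : FractionalIdeal (LocAt R M hM.isPrime)⁰ K) ≠ 0 := by
    apply FractionalIdeal.coeIdeal_ne_zero.mpr
    rw [MapAt, Ne, Ideal.map_eq_bot_iff_of_injective injRL]
    exact hB0
  have himg : ∀ (c : K) (S : Set K),
      ⇑(LinearMap.mulLeft R c) '' S = ⇑(LinearMap.mulLeft (LocAt R M hM.isPrime) c) '' S := by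
    intro c S
    ext z
    simp only [Set.mem_image, LinearMap.mulLeft_apply]
  have claimA : (1 / (MapAt R M hM.isPrime A : FractionalIdeal (LocAt R M hM.isPrime)⁰ K)) =
      FractionalIdeal.spanSingleton (LocAt R M hM.isPrime)⁰ (algebraMap R K d)⁻¹ *
        (MapAt R M hM.isPrime B : FractionalIdeal (LocAt R M hM.isPrime)⁰ K) := by
    apply FractionalIdeal.coeToSubmodule_injective
    beta_reduce
    rw [part1, hinvA, singleton_mul_eq_map, singleton_mul_eq_map, Submodule.map_coe,
      himg _ _, ← Submodule.map_span, span_coeIdeal_eq K M hM B]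
  have lhs2 : (1 / (1 / (MapAt R M hM.isPrime A : FractionalIdeal (LocAt R M hM.isPrime)⁰ K))) =
      FractionalIdeal.spanSingleton (LocAt R M hM.isPrime)⁰ (algebraMap R K d) *
        (1 / (MapAt R M hM.isPrime B : FractionalIdeal (LocAt R M hM.isPrime)⁰ K)) := by
    rw [claimA, one_div_spanSingleton_mul_s5 _ (inv_ne_zero he) _ hMapBne, inv_inv]
  have hinv2 : (1 / (1 / (A : FractionalIdeal R⁰ K))) =
      FractionalIdeal.spanSingleton R⁰ (algebraMap R K d) * (1 / (B : FractionalIdeal R⁰ K)) := by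
    rw [hinvA, one_div_spanSingleton_mul_s5 _ (inv_ne_zero he) _ hBne, inv_inv]
  rw [lhs2, hinv2, singleton_mul_eq_map, singleton_mul_eq_map, Submodule.map_coe, himg _ _,
    ← Submodule.map_span, inv_localize hR hH K M hM B hB0]
end
end

section
/- Let R be a Prüfer domain with the weak factorization property. Then every ideal of R that is primary to a nonmaximal prime ideal is divisorial; in particular, every nonzero nonmaximal prime ideal of R is divisorial. -/
open scoped nonZeroDivisors

noncomputable section

variable (R : Type*) [CommRing R] [IsDomain R]

lemma aux_mapcoe (l : Multiset (Ideal R)) :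
    (l.map (fun M => (M : FractionalIdeal R⁰ (FractionRing R)))) =
      Multiset.map (fun M : Ideal R =>
        (FractionalIdeal.coeIdeal M : FractionalIdeal R⁰ (FractionRing R))) l := by
  simp [Multiset.map_id']

lemma aux_mul_le_mul {A B C D : FractionalIdeal R⁰ (FractionRing R)}
    (h1 : A ≤ B) (h2 : C ≤ D) : A * C ≤ B * D :=
  mul_le_mul' h1 h2

lemma aux_prod_le_one (l : Multiset (Ideal R)) :
    (Multiset.map (fun M : Ideal R =>
      (FractionalIdeal.coeIdeal M : FractionalIdeal R⁰ (FractionRing R))) l).prod ≤ 1 := by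
  induction l using Multiset.induction with
  | empty => simp
  | cons M l ih =>
    rw [Multiset.map_cons, Multiset.prod_cons]
    calc (FractionalIdeal.coeIdeal M : FractionalIdeal R⁰ (FractionRing R)) *
          (Multiset.map (fun M : Ideal R =>
            (FractionalIdeal.coeIdeal M : FractionalIdeal R⁰ (FractionRing R))) l).prod
        ≤ 1 * 1 := aux_mul_le_mul R FractionalIdeal.coeIdeal_le_one ih
      _ = 1 := one_mul 1

lemma aux_prod_le_mem {l : Multiset (Ideal R)} {M : Ideal R} (hM : M ∈ l) :
    (Multiset.map (fun M : Ideal R =>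
      (FractionalIdeal.coeIdeal M : FractionalIdeal R⁰ (FractionRing R))) l).prod ≤
      (M : FractionalIdeal R⁰ (FractionRing R)) := by
  obtain ⟨l', rfl⟩ := Multiset.exists_cons_of_mem hM
  rw [Multiset.map_cons, Multiset.prod_cons]
  calc (FractionalIdeal.coeIdeal M : FractionalIdeal R⁰ (FractionRing R)) *
        (Multiset.map (fun M : Ideal R =>
          (FractionalIdeal.coeIdeal M : FractionalIdeal R⁰ (FractionRing R))) l').prod
      ≤ (FractionalIdeal.coeIdeal M : FractionalIdeal R⁰ (FractionRing R)) * 1 :=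
        mul_le_mul_right (aux_prod_le_one R l') _
    _ = _ := mul_one _

lemma aux_one_mem_inv {Q : Ideal R} (hQ : Q ≠ ⊥) :
    (1 : FractionRing R) ∈ (1 / (Q : FractionalIdeal R⁰ (FractionRing R))) := by
  rw [FractionalIdeal.mem_div_iff_of_ne_zero (FractionalIdeal.coeIdeal_ne_zero.2 hQ)]
  intro y hy
  rw [one_mul]
  exact FractionalIdeal.coeIdeal_le_one hy

lemma aux_inv_ne_zero {Q : Ideal R} (hQ : Q ≠ ⊥) :
    (1 / (Q : FractionalIdeal R⁰ (FractionRing R))) ≠ 0 := by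
  intro h
  have h1 := aux_one_mem_inv R hQ
  rw [h] at h1
  simp at h1

lemma aux_divClos_le_one {Q : Ideal R} (hQ : Q ≠ ⊥) : divClos R Q ≤ 1 := by
  intro x hx
  have hx' : x ∈ (1 : FractionalIdeal R⁰ (FractionRing R)) /
      (1 / (Q : FractionalIdeal R⁰ (FractionRing R))) := hx
  rw [FractionalIdeal.mem_div_iff_of_ne_zero (aux_inv_ne_zero R hQ)] at hx'
  show x ∈ (1 : FractionalIdeal R⁰ (FractionRing R))
  have := hx' 1 (aux_one_mem_inv R hQ)
  rwa [mul_one] at this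

lemma aux_le_divClos {Q : Ideal R} (hQ : Q ≠ ⊥) :
    (Q : FractionalIdeal R⁰ (FractionRing R)) ≤ divClos R Q := by
  intro x hx
  have hx' : x ∈ (Q : FractionalIdeal R⁰ (FractionRing R)) := hx
  show x ∈ (1 : FractionalIdeal R⁰ (FractionRing R)) /
      (1 / (Q : FractionalIdeal R⁰ (FractionRing R)))
  rw [FractionalIdeal.mem_div_iff_of_ne_zero (aux_inv_ne_zero R hQ)]
  intro y hy
  rw [FractionalIdeal.mem_div_iff_of_ne_zero (FractionalIdeal.coeIdeal_ne_zero.2 hQ)] at hy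
  rw [mul_comm]
  exact hy x hx'

/-- In a Prüfer domain with the weak factorization property, every nonzero ideal primary to a
nonmaximal prime is divisorial; in particular every nonzero nonmaximal prime is divisorial. -/
theorem stmt6 (hR : IsPruferDomain R) (hW : WeakFactorization R) :
    (∀ P Q : Ideal R, P.IsPrime → ¬ P.IsMaximal → Q ≠ ⊥ → Q.IsPrimary → Q.radical = P →
      Divisorial R Q) ∧
    ∀ P : Ideal R, P.IsPrime → P ≠ ⊥ → ¬ P.IsMaximal → Divisorial R P := by
  have main : ∀ P Q : Ideal R, P.IsPrime → ¬ P.IsMaximal → Q ≠ ⊥ → Q.IsPrimary →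
      Q.radical = P → Divisorial R Q := by
    intro P Q hP hPnm hQ hQprim hrad
    obtain ⟨l, hl, heq⟩ := hW Q hQ
    rw [aux_mapcoe] at heq
    have hwit : ∀ M ∈ l, ∃ b : R, b ∈ M ∧ b ∉ P := by
      intro M hMl
      have hQM : Q ≤ M := by
        have h1 : (Q : FractionalIdeal R⁰ (FractionRing R)) ≤
            (M : FractionalIdeal R⁰ (FractionRing R)) := by
          rw [heq]
          calc divClos R Q * (Multiset.map (fun M : Ideal R =>
                (FractionalIdeal.coeIdeal M : FractionalIdeal R⁰ (FractionRing R))) l).prod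
              ≤ 1 * (M : FractionalIdeal R⁰ (FractionRing R)) :=
                aux_mul_le_mul R (aux_divClos_le_one R hQ) (aux_prod_le_mem R hMl)
            _ = _ := one_mul _
        exact (FractionalIdeal.coeIdeal_le_coeIdeal _).1 h1
      have hPM : P ≤ M := by
        rw [← hrad, ← (hl M hMl).isPrime.radical]
        exact Ideal.radical_mono hQM
      by_contra hcon
      push_neg at hcon
      have hMP : M ≤ P := fun b hb => hcon b hb
      exact hPnm ((le_antisymm hPM hMP) ▸ hl M hMl)
    have hprod : ∃ a : R, a ∉ P ∧ (algebraMap R (FractionRing R)) a ∈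
        (Multiset.map (fun M : Ideal R =>
          (FractionalIdeal.coeIdeal M : FractionalIdeal R⁰ (FractionRing R))) l).prod := by
      clear heq
      induction l using Multiset.induction with
      | empty =>
        refine ⟨1, fun h => hP.ne_top ((Ideal.eq_top_iff_one P).2 h), ?_⟩
        rw [Multiset.map_zero, Multiset.prod_zero, map_one]
        exact FractionalIdeal.one_mem_one _
      | cons M l ih =>
        obtain ⟨a, haP, ha⟩ := ih (fun N hN => hl N (Multiset.mem_cons_of_mem hN))
          (fun N hN => hwit N (Multiset.mem_cons_of_mem hN))
        obtain ⟨b, hbM, hbP⟩ := hwit M (Multiset.mem_cons_self M l)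
        refine ⟨b * a, fun h => ((hP.mem_or_mem h).elim hbP haP), ?_⟩
        rw [Multiset.map_cons, Multiset.prod_cons, map_mul]
        exact FractionalIdeal.mul_mem_mul (FractionalIdeal.mem_coeIdeal _ |>.2 ⟨b, hbM, rfl⟩) ha
    obtain ⟨a, haP, ha⟩ := hprod
    refine le_antisymm ?_ (aux_le_divClos R hQ)
    intro x hx
    have hx' : x ∈ divClos R Q := hx
    obtain ⟨r, hr⟩ := (FractionalIdeal.mem_one_iff _).1 (aux_divClos_le_one R hQ hx')
    have hxa : x * (algebraMap R (FractionRing R)) a ∈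
        (Q : FractionalIdeal R⁰ (FractionRing R)) := by
      rw [heq]
      exact FractionalIdeal.mul_mem_mul hx' ha
    rw [← hr, ← map_mul] at hxa
    obtain ⟨s, hsQ, hs⟩ := (FractionalIdeal.mem_coeIdeal _).1 hxa
    have hinj : Function.Injective (algebraMap R (FractionRing R)) :=
      IsFractionRing.injective R (FractionRing R)
    have hraQ : r * a ∈ Q := by rwa [← hinj hs]
    have hrQ : r ∈ Q := by
      rcases (Ideal.isPrimary_iff.mp hQprim).2 (x := r) (y := a) hraQ with h | h
      · exact h
      · exact absurd (hrad ▸ h) haP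
    show x ∈ (Q : FractionalIdeal R⁰ (FractionRing R))
    exact hr ▸ (FractionalIdeal.mem_coeIdeal _).2 ⟨r, hrQ, rfl⟩
  exact ⟨main, fun P hP hPne hPnm =>
    main P P hP hPnm hPne hP.isPrimary hP.radical⟩
end
end

section
/- Let R be a Prüfer domain with the weak factorization property. Then for every nonzero nonmaximal prime ideal P and every nonzero P-primary ideal Q of R, Q Q^{-1} = P. -/
open scoped nonZeroDivisors

noncomputable section

variable (R : Type*) [CommRing R] [IsDomain R]

namespace Stmt8Aux

open FractionalIdeal

variable {R : Type*} [CommRing R] [IsDomain R]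

theorem fi_mul_mono {A B C D : FractionalIdeal R⁰ (FractionRing R)} (h1 : A ≤ C) (h2 : B ≤ D) :
    A * B ≤ C * D :=
  mul_le.mpr fun i hi j hj => mul_mem_mul (h1 hi) (h2 hj)

theorem mem_add_iff {A B : FractionalIdeal R⁰ (FractionRing R)} {x : FractionRing R} :
    x ∈ A + B ↔ ∃ y ∈ A, ∃ z ∈ B, y + z = x := by
  rw [← FractionalIdeal.mem_coe, FractionalIdeal.coe_add, Submodule.add_eq_sup,
    Submodule.mem_sup]
  simp [FractionalIdeal.mem_coe]

/-- Key absorption lemma: a primary ideal absorbs multiplication by any ideal `M`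
containing its radical together with an element outside the radical. -/
theorem absorb (hR : IsPruferDomain R) {J P M : Ideal R} (hJ : J.IsPrimary)
    (hJP : J.radical = P) (hPM : P ≤ M) {m : R} (hmM : m ∈ M) (hmP : m ∉ P) :
    J * M = J := by
  refine le_antisymm Ideal.mul_le_left ?_
  intro q hq
  have hm0 : m ≠ 0 := by rintro rfl; exact hmP (hJP ▸ Ideal.le_radical J.zero_mem)
  set I : Ideal R := Ideal.span {q, m} with hIdef
  have hIne : I ≠ ⊥ := by
    intro h
    exact hm0 ((Ideal.span_eq_bot.mp h) m (by simp))
  have hIfg : I.FG := Submodule.fg_span ((Set.finite_singleton m).insert q)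
  obtain ⟨u, hu⟩ := hR I hIne hIfg
  set Z : FractionalIdeal R⁰ (FractionRing R) :=
    ((u⁻¹ : (FractionalIdeal R⁰ (FractionRing R))ˣ) : FractionalIdeal R⁰ (FractionRing R))
    with hZdef
  have hZ : (I : FractionalIdeal R⁰ (FractionRing R)) * Z = 1 := by
    rw [← hu, hZdef]; exact_mod_cast u.mul_inv
  have hmem : ∀ z ∈ Z, ∀ g ∈ I, ∃ r : R,
      algebraMap R (FractionRing R) r = algebraMap R (FractionRing R) g * z := by
    intro z hz g hg
    have h1 : algebraMap R (FractionRing R) g * z ∈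
        (I : FractionalIdeal R⁰ (FractionRing R)) * Z :=
      mul_mem_mul ((mem_coeIdeal _).mpr ⟨g, hg, rfl⟩) hz
    rw [hZ] at h1
    exact (mem_one_iff _).mp h1
  have hcoeI : (I : FractionalIdeal R⁰ (FractionRing R)) =
      spanSingleton R⁰ (algebraMap R (FractionRing R) q) +
        spanSingleton R⁰ (algebraMap R (FractionRing R) m) := by
    rw [hIdef, show ({q, m} : Set R) = insert q {m} from rfl, Ideal.span_insert,
      coeIdeal_sup, coeIdeal_span_singleton, coeIdeal_span_singleton]
  have h1 : (1 : FractionRing R) ∈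
      spanSingleton R⁰ (algebraMap R (FractionRing R) q) * Z +
        spanSingleton R⁰ (algebraMap R (FractionRing R) m) * Z := by
    rw [← add_mul, ← hcoeI, hZ]; exact one_mem_one _
  obtain ⟨a, ha, b, hb, hab⟩ := mem_add_iff.mp h1
  obtain ⟨z₁, hz₁, rfl⟩ := mem_singleton_mul.mp ha
  obtain ⟨z₂, hz₂, rfl⟩ := mem_singleton_mul.mp hb
  have hqI : q ∈ I := by rw [hIdef]; exact Ideal.subset_span (by simp)
  have hmI : m ∈ I := by rw [hIdef]; exact Ideal.subset_span (by simp)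
  obtain ⟨α, hα⟩ := hmem z₁ hz₁ q hqI
  obtain ⟨ε, hε⟩ := hmem z₁ hz₁ m hmI
  obtain ⟨δ, hδ⟩ := hmem z₂ hz₂ q hqI
  obtain ⟨φ, hφ⟩ := hmem z₂ hz₂ m hmI
  have inj : Function.Injective (algebraMap R (FractionRing R)) :=
    IsFractionRing.injective R (FractionRing R)
  have h1R : α + φ = 1 := inj (by rw [_root_.map_add, hα, hφ, _root_.map_one]; exact hab)
  have hme : m * α = q * ε := inj (by rw [_root_.map_mul, _root_.map_mul, hα, hε]; ring)
  have hqφ : m * δ = q * φ := inj (by rw [_root_.map_mul, _root_.map_mul, hδ, hφ]; ring)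
  have hαJ : α ∈ J := by
    rcases (Ideal.isPrimary_iff.mp hJ).2 (show α * m ∈ J by rw [mul_comm, hme]; exact J.mul_mem_right ε hq) with h | h
    · exact h
    · exact absurd (hJP ▸ h) hmP
  have hδJ : δ ∈ J := by
    rcases (Ideal.isPrimary_iff.mp hJ).2 (show δ * m ∈ J by rw [mul_comm, hqφ]; exact J.mul_mem_right φ hq) with h | h
    · exact h
    · exact absurd (hJP ▸ h) hmP
  have hαM : α ∈ M := hPM (hJP ▸ Ideal.le_radical hαJ)
  have hqs : q = q * α + δ * m := by
    have : q * (α + φ) = q := by rw [h1R, mul_one]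
    calc q = q * α + q * φ := by rw [← mul_add, h1R, mul_one]
    _ = q * α + δ * m := by rw [← hqφ]; ring
  rw [hqs]
  exact Ideal.add_mem _ (Ideal.mul_mem_mul hq hαM) (Ideal.mul_mem_mul hδJ hmM)

end Stmt8Aux

namespace Stmt8Aux

variable {R : Type*} [CommRing R] [IsDomain R]
open FractionalIdeal

/-- `R` is root-closed in its fraction field. -/
theorem pow_mem_one (hR : IsPruferDomain R) {y : FractionRing R} {m : ℕ} (hm : m ≠ 0)
    (hy : y ^ m ∈ (1 : FractionalIdeal R⁰ (FractionRing R))) :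
    y ∈ (1 : FractionalIdeal R⁰ (FractionRing R)) := by
  by_cases hy0 : y = 0
  · rw [hy0]; exact zero_mem _
  set S : FractionalIdeal R⁰ (FractionRing R) := 1 ⊔ spanSingleton R⁰ y with hS
  have h1S : (1 : FractionalIdeal R⁰ (FractionRing R)) ≤ S := le_sup_left
  have hyS : spanSingleton R⁰ y ≤ S := le_sup_right
  -- S is invertible
  obtain ⟨a, b, hb, hab⟩ := IsFractionRing.div_surjective (A := R) y
  have hbne : algebraMap R (FractionRing R) b ≠ 0 := by
    simpa using nonZeroDivisors.ne_zero hb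
  have hba : algebraMap R (FractionRing R) b * y = algebraMap R (FractionRing R) a := by
    rw [← hab]; field_simp
  have hSunit : IsUnit S := by
    have h2 : spanSingleton R⁰ (algebraMap R (FractionRing R) b) * S =
        ((Ideal.span {a, b} : Ideal R) : FractionalIdeal R⁰ (FractionRing R)) := by
      rw [hS, sup_eq_add, mul_add, mul_one, spanSingleton_mul_spanSingleton, hba,
        show ({a, b} : Set R) = insert a {b} from rfl, Ideal.span_insert,
        coeIdeal_sup, coeIdeal_span_singleton, coeIdeal_span_singleton]
      exact add_comm _ _
    have hne : (Ideal.span {a, b} : Ideal R) ≠ ⊥ := by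
      intro h
      exact (nonZeroDivisors.ne_zero hb)
        ((Ideal.span_eq_bot.mp h) b (by simp))
    have h3 : IsUnit ((Ideal.span {a, b} : Ideal R) : FractionalIdeal R⁰ (FractionRing R)) :=
      hR _ hne (Submodule.fg_span ((Set.finite_singleton b).insert a))
    rw [← h2] at h3
    exact isUnit_of_mul_isUnit_right h3
  -- powers of S are at least 1
  have hone_le_pow : ∀ n : ℕ, (1 : FractionalIdeal R⁰ (FractionRing R)) ≤ S ^ n := by
    intro n
    induction n with
    | zero => rw [pow_zero]
    | succ n ih =>
      rw [pow_succ]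
      calc (1 : FractionalIdeal R⁰ (FractionRing R)) = 1 * 1 := (one_mul _).symm
      _ ≤ S ^ n * S := fi_mul_mono ih h1S
  have hpowy : ∀ j : ℕ, (spanSingleton R⁰ y) ^ j ≤ S ^ j := by
    intro j
    induction j with
    | zero => simp
    | succ j ihj => rw [pow_succ, pow_succ]; exact fi_mul_mono ihj hyS
  -- key inequality
  have key : ∀ n : ℕ, spanSingleton R⁰ y * S ^ n ≤ S ^ n ⊔ spanSingleton R⁰ (y ^ (n + 1)) := by
    intro n
    induction n with
    | zero => rw [pow_zero, mul_one, pow_one]; exact le_sup_right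
    | succ n ih =>
      have step1 : spanSingleton R⁰ y * S ^ (n + 1) =
          spanSingleton R⁰ y * S ^ n * S := by rw [pow_succ, mul_assoc]
      have step2 : spanSingleton R⁰ y * S ^ n * S ≤
          (S ^ n ⊔ spanSingleton R⁰ (y ^ (n + 1))) * S := fi_mul_mono ih le_rfl
      have step3 : (S ^ n ⊔ spanSingleton R⁰ (y ^ (n + 1))) * S =
          S ^ (n + 1) ⊔ spanSingleton R⁰ (y ^ (n + 1)) * S := by
        rw [sup_eq_add, add_mul, ← pow_succ, sup_eq_add]
      have step4 : spanSingleton R⁰ (y ^ (n + 1)) * S ≤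
          S ^ (n + 1) ⊔ spanSingleton R⁰ (y ^ (n + 2)) := by
        have e : spanSingleton R⁰ (y ^ (n + 1)) * S =
            spanSingleton R⁰ (y ^ (n + 1)) ⊔ spanSingleton R⁰ (y ^ (n + 2)) := by
          rw [hS, sup_eq_add, mul_add, mul_one, spanSingleton_mul_spanSingleton, ← pow_succ,
            sup_eq_add]
        rw [e]
        refine sup_le (le_trans ?_ le_sup_left) le_sup_right
        rw [← spanSingleton_pow]
        exact hpowy (n + 1)
      calc spanSingleton R⁰ y * S ^ (n + 1)
          ≤ (S ^ n ⊔ spanSingleton R⁰ (y ^ (n + 1))) * S := by rw [step1]; exact step2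
      _ = S ^ (n + 1) ⊔ spanSingleton R⁰ (y ^ (n + 1)) * S := step3
      _ ≤ S ^ (n + 1) ⊔ (S ^ (n + 1) ⊔ spanSingleton R⁰ (y ^ (n + 2))) := sup_le_sup_left step4 _
      _ = S ^ (n + 1) ⊔ spanSingleton R⁰ (y ^ (n + 2)) := by rw [← sup_assoc, sup_idem]
  obtain ⟨k, rfl⟩ := Nat.exists_eq_succ_of_ne_zero hm
  have hSk : S ^ (k + 1) = S ^ k := by
    refine le_antisymm ?_ ?_
    · have e1 : S ^ (k + 1) = S ^ k * 1 + S ^ k * spanSingleton R⁰ y := by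
        rw [pow_succ, hS, sup_eq_add, mul_add]
      rw [e1, mul_one, ← sup_eq_add]
      refine sup_le le_rfl ?_
      rw [mul_comm]
      refine le_trans (key k) (sup_le le_rfl ?_)
      refine le_trans (spanSingleton_le_iff_mem.mpr ?_) (hone_le_pow k)
      exact hy
    · calc S ^ k = S ^ k * 1 := (mul_one _).symm
      _ ≤ S ^ k * S := fi_mul_mono le_rfl h1S
      _ = S ^ (k + 1) := (pow_succ S k).symm
  have hSkUnit : IsUnit (S ^ k) := hSunit.pow k
  have hcancel : S * S ^ k = 1 * S ^ k := by
    rw [one_mul, ← pow_succ', hSk]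
  have hS1 : S = 1 := hSkUnit.mul_right_cancel hcancel
  exact hS1 ▸ hyS (mem_spanSingleton_self _ y)

theorem isUnit_inf {A B : FractionalIdeal R⁰ (FractionRing R)} (hA : IsUnit A) (hB : IsUnit B)
    (hS : IsUnit (A ⊔ B)) : IsUnit (A ⊓ B) := by
  obtain ⟨u, hu⟩ := hS
  set S' : FractionalIdeal R⁰ (FractionRing R) :=
    ((u⁻¹ : (FractionalIdeal R⁰ (FractionRing R))ˣ) : FractionalIdeal R⁰ (FractionRing R))
    with hS'def
  have hS'unit : IsUnit S' := Units.isUnit _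
  have hSS' : (A ⊔ B) * S' = 1 := by rw [← hu, hS'def]; exact_mod_cast u.mul_inv
  have h1 : (A ⊓ B) * (A ⊔ B) = A * B := by
    refine le_antisymm ?_ ?_
    · rw [sup_eq_add, mul_add, ← sup_eq_add]
      refine sup_le ?_ ?_
      · calc (A ⊓ B) * A ≤ B * A := fi_mul_mono inf_le_right le_rfl
        _ = A * B := mul_comm _ _
      · exact fi_mul_mono inf_le_left le_rfl
    · have h2 : A * B * S' ≤ A ⊓ B := by
        refine le_inf ?_ ?_
        · calc A * B * S' = A * (B * S') := mul_assoc _ _ _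
          _ ≤ A * ((A ⊔ B) * S') := fi_mul_mono le_rfl (fi_mul_mono le_sup_right le_rfl)
          _ = A := by rw [hSS', mul_one]
        · calc A * B * S' = B * (A * S') := by ring
          _ ≤ B * ((A ⊔ B) * S') := fi_mul_mono le_rfl (fi_mul_mono le_sup_left le_rfl)
          _ = B := by rw [hSS', mul_one]
      calc A * B = A * B * (S' * (A ⊔ B)) := by rw [mul_comm S', hSS', mul_one]
      _ = A * B * S' * (A ⊔ B) := by ring
      _ ≤ (A ⊓ B) * (A ⊔ B) := fi_mul_mono h2 le_rfl
  have h3 : A ⊓ B = A * B * S' := by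
    calc A ⊓ B = (A ⊓ B) * ((A ⊔ B) * S') := by rw [hSS', mul_one]
    _ = (A ⊓ B) * (A ⊔ B) * S' := (mul_assoc _ _ _).symm
    _ = A * B * S' := by rw [h1]
  rw [h3]
  exact (hA.mul hB).mul hS'unit

end Stmt8Aux

namespace Stmt8Aux

variable {R : Type*} [CommRing R] [IsDomain R]
open FractionalIdeal

theorem one_div_anti {A B : FractionalIdeal R⁰ (FractionRing R)} (hA : A ≠ 0) (hAB : A ≤ B) :
    1 / B ≤ 1 / A := by
  have hB : B ≠ 0 := fun h => hA (le_antisymm (le_trans hAB h.le) (zero_le _))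
  intro x hx
  have hx' : x ∈ 1 / B := hx
  show x ∈ 1 / A
  rw [mem_div_iff_of_ne_zero hA]
  rw [mem_div_iff_of_ne_zero hB] at hx'
  exact fun y hy => hx' y (hAB hy)

theorem q_not_unit (hR : IsPruferDomain R) {P Q : Ideal R} (hP : P.IsPrime)
    (hPnm : ¬ P.IsMaximal) (hQ : Q.IsPrimary) (hrad : Q.radical = P) :
    ¬ IsUnit (Q : FractionalIdeal R⁰ (FractionRing R)) := by
  intro hu
  obtain ⟨M, hM, hPM⟩ := P.exists_le_maximal hP.ne_top
  have hPltM : P < M := lt_of_le_of_ne hPM fun e => hPnm (e ▸ hM)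
  obtain ⟨m, hmM, hmP⟩ := SetLike.exists_of_lt hPltM
  have habs := absorb hR hQ hrad hPM hmM hmP
  have h1 : (Q : FractionalIdeal R⁰ (FractionRing R)) * (M : FractionalIdeal R⁰ (FractionRing R))
      = (Q : FractionalIdeal R⁰ (FractionRing R)) * 1 := by
    rw [mul_one, ← coeIdeal_mul, habs]
  have hM1 : (M : FractionalIdeal R⁰ (FractionRing R)) = 1 := hu.mul_left_cancel h1
  have : M = ⊤ := coeIdeal_injective (K := FractionRing R)
    (show ((M : Ideal R) : FractionalIdeal R⁰ (FractionRing R)) = ((⊤ : Ideal R) : _) by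
      rw [hM1, coeIdeal_top])
  exact hM.ne_top this

/-- Upper bound for the trace: `Q · (R : Q) ⊆ P`. -/
theorem part1 (hR : IsPruferDomain R) {P Q : Ideal R} (hP : P.IsPrime) (hPnm : ¬ P.IsMaximal)
    (hQnz : Q ≠ ⊥) (hQ : Q.IsPrimary) (hrad : Q.radical = P) :
    (Q : FractionalIdeal R⁰ (FractionRing R)) * (1 / (Q : FractionalIdeal R⁰ (FractionRing R)))
      ≤ (P : FractionalIdeal R⁰ (FractionRing R)) := by
  have inj : Function.Injective (algebraMap R (FractionRing R)) :=
    IsFractionRing.injective R (FractionRing R)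
  set q : FractionalIdeal R⁰ (FractionRing R) := (Q : FractionalIdeal R⁰ (FractionRing R))
    with hqdef
  have hq0 : q ≠ 0 := coeIdeal_ne_zero.mpr hQnz
  have hDq : 1 / q * q ≤ 1 :=
    mul_le.mpr fun i hi j hj => (mem_div_iff_of_ne_zero hq0).mp hi j hj
  have ht1 : q * (1 / q) ≤ 1 := by rw [mul_comm]; exact hDq
  intro z hz
  have hzS : z ∈ (q : Submodule R (FractionRing R)) *
      ((1 / q : FractionalIdeal R⁰ (FractionRing R)) : Submodule R (FractionRing R)) := by
    rw [← FractionalIdeal.coe_mul]; exact hz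
  have hex : ∃ G : Ideal R, G.FG ∧ G ≤ Q ∧ z ∈ (G : FractionalIdeal R⁰ (FractionRing R)) * (1 / q) := by
    refine Submodule.mul_induction_on hzS ?_ ?_
    · intro x hx y hy
      obtain ⟨x', hx', rfl⟩ := (mem_coeIdeal _).mp (FractionalIdeal.mem_coe.mp hx)
      refine ⟨Ideal.span {x'}, Submodule.fg_span (Set.finite_singleton x'),
        Ideal.span_le.mpr (by simpa using hx'), ?_⟩
      rw [coeIdeal_span_singleton]
      exact mul_mem_mul (mem_spanSingleton_self _ _) (FractionalIdeal.mem_coe.mp hy)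
    · rintro x y ⟨G₁, h1f, h1le, h1m⟩ ⟨G₂, h2f, h2le, h2m⟩
      refine ⟨G₁ ⊔ G₂, Submodule.FG.sup h1f h2f, sup_le h1le h2le, ?_⟩
      have l1 : (G₁ : FractionalIdeal R⁰ (FractionRing R)) * (1 / q) ≤ (↑(G₁ ⊔ G₂)) * (1 / q) :=
        fi_mul_mono (coeIdeal_le_coeIdeal _ |>.mpr le_sup_left) le_rfl
      have l2 : (G₂ : FractionalIdeal R⁰ (FractionRing R)) * (1 / q) ≤ (↑(G₁ ⊔ G₂)) * (1 / q) :=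
        fi_mul_mono (coeIdeal_le_coeIdeal _ |>.mpr le_sup_right) le_rfl
      exact FractionalIdeal.mem_coe.mp
        (Submodule.add_mem _ (FractionalIdeal.mem_coe.mpr (l1 h1m))
          (FractionalIdeal.mem_coe.mpr (l2 h2m)))
  obtain ⟨G, hGfg, hGle, hzG⟩ := hex
  have hz1 : z ∈ (1 : FractionalIdeal R⁰ (FractionRing R)) := ht1 hz
  obtain ⟨z', rfl⟩ := (mem_one_iff _).mp hz1
  by_cases hzP : z' ∈ P
  · exact (mem_coeIdeal _).mpr ⟨z', hzP, rfl⟩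
  exfalso
  have hz'0 : z' ≠ 0 := fun h => hzP (h ▸ P.zero_mem)
  have hz'K : algebraMap R (FractionRing R) z' ≠ 0 := fun h => hz'0 (inj (by rw [h, _root_.map_zero]))
  have hzQG : ∀ x ∈ Q, z' * x ∈ G := by
    intro x hx
    have h1 : spanSingleton R⁰ (algebraMap R (FractionRing R) z') * q ≤
        (G : FractionalIdeal R⁰ (FractionRing R)) * (1 / q) * q :=
      fi_mul_mono (spanSingleton_le_iff_mem.mpr hzG) le_rfl
    have h2 : (G : FractionalIdeal R⁰ (FractionRing R)) * (1 / q) * q ≤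
        (G : FractionalIdeal R⁰ (FractionRing R)) := by
      rw [mul_assoc]
      calc (G : FractionalIdeal R⁰ (FractionRing R)) * (1 / q * q) ≤ ↑G * 1 :=
        fi_mul_mono le_rfl hDq
      _ = ↑G := mul_one _
    have h3 : algebraMap R (FractionRing R) z' * algebraMap R (FractionRing R) x ∈
        (G : FractionalIdeal R⁰ (FractionRing R)) :=
      h2 (h1 (mul_mem_mul (mem_spanSingleton_self _ _) ((mem_coeIdeal _).mpr ⟨x, hx, rfl⟩)))
    rw [← _root_.map_mul] at h3
    obtain ⟨w, hw, he⟩ := (mem_coeIdeal _).mp h3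
    rwa [← inj he]
  set A : FractionalIdeal R⁰ (FractionRing R) :=
    spanSingleton R⁰ ((algebraMap R (FractionRing R) z')⁻¹) * (G : FractionalIdeal R⁰ (FractionRing R))
    with hA
  have hGne : G ≠ ⊥ := by
    obtain ⟨x₀, hx₀, hx₀ne⟩ := (Submodule.ne_bot_iff Q).mp hQnz
    intro h
    have := hzQG x₀ hx₀
    rw [h, Ideal.mem_bot] at this
    exact (mul_ne_zero hz'0 hx₀ne) this
  have hQeq : q = A ⊓ 1 := by
    refine le_antisymm (le_inf ?_ coeIdeal_le_one) ?_
    · intro x hx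
      obtain ⟨x', hx', rfl⟩ := (mem_coeIdeal _).mp hx
      show algebraMap R (FractionRing R) x' ∈ A
      rw [hA, mem_singleton_mul]
      refine ⟨algebraMap R (FractionRing R) (z' * x'),
        (mem_coeIdeal _).mpr ⟨z' * x', hzQG x' hx', rfl⟩, ?_⟩
      rw [_root_.map_mul, ← mul_assoc, inv_mul_cancel₀ hz'K, one_mul]
    · intro x hx
      have hx1 : x ∈ (1 : FractionalIdeal R⁰ (FractionRing R)) := (inf_le_right : A ⊓ 1 ≤ 1) hx
      obtain ⟨x', rfl⟩ := (mem_one_iff _).mp hx1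
      have hxA : algebraMap R (FractionRing R) x' ∈ A := (inf_le_left : A ⊓ 1 ≤ A) hx
      rw [hA, mem_singleton_mul] at hxA
      obtain ⟨g, hg, he⟩ := hxA
      obtain ⟨g', hg', hge⟩ := (mem_coeIdeal _).mp hg
      have hzg : z' * x' = g' := by
        apply inj
        rw [_root_.map_mul, hge, he, ← mul_assoc, mul_inv_cancel₀ hz'K, one_mul]
      have hmem : x' * z' ∈ Q := by rw [mul_comm, hzg]; exact hGle hg'
      rcases (Ideal.isPrimary_iff.mp hQ).2 hmem with h | h
      · exact (mem_coeIdeal _).mpr ⟨x', h, rfl⟩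
      · exact absurd (hrad ▸ h) hzP
  have hz'unit : IsUnit (spanSingleton R⁰ ((algebraMap R (FractionRing R) z')⁻¹)) :=
    IsUnit.of_mul_eq_one (spanSingleton R⁰ (algebraMap R (FractionRing R) z'))
      (by rw [spanSingleton_mul_spanSingleton, inv_mul_cancel₀ hz'K, spanSingleton_one])
  have hGunit : IsUnit (G : FractionalIdeal R⁰ (FractionRing R)) := hR G hGne hGfg
  have hAunit : IsUnit A := hz'unit.mul hGunit
  have hsupUnit : IsUnit (A ⊔ 1) := by
    have h2 : spanSingleton R⁰ (algebraMap R (FractionRing R) z') * (A ⊔ 1) =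
        ((G ⊔ Ideal.span {z'} : Ideal R) : FractionalIdeal R⁰ (FractionRing R)) := by
      rw [sup_eq_add, mul_add, mul_one, hA, ← mul_assoc, spanSingleton_mul_spanSingleton,
        mul_inv_cancel₀ hz'K, spanSingleton_one, one_mul, coeIdeal_sup, coeIdeal_span_singleton]
    have hne : (G ⊔ Ideal.span {z'} : Ideal R) ≠ ⊥ := fun h =>
      hGne (le_bot_iff.mp (h ▸ (le_sup_left : G ≤ G ⊔ Ideal.span {z'})))
    have h3 : IsUnit ((G ⊔ Ideal.span {z'} : Ideal R) : FractionalIdeal R⁰ (FractionRing R)) :=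
      hR _ hne (Submodule.FG.sup hGfg (Submodule.fg_span (Set.finite_singleton z')))
    rw [← h2] at h3
    exact isUnit_of_mul_isUnit_right h3
  have : IsUnit q := by rw [hQeq]; exact isUnit_inf hAunit isUnit_one hsupUnit
  exact q_not_unit hR hP hPnm hQ hrad this

end Stmt8Aux

namespace Stmt8Aux

variable {R : Type*} [CommRing R] [IsDomain R]
open FractionalIdeal

theorem bridge (l : Multiset (Ideal R)) :
    (l.map (fun M => (M : FractionalIdeal R⁰ (FractionRing R)))).prod
      = (l.map (fun M : Ideal R => (M : FractionalIdeal R⁰ (FractionRing R)))).prod := by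
  show ((l.bind fun a => {(a : FractionalIdeal R⁰ (FractionRing R))}).map (fun M => M)).prod = _
  rw [Multiset.map_id', Multiset.bind_singleton]

theorem prod_le_one {l : Multiset (Ideal R)} :
    (l.map (fun M : Ideal R => (M : FractionalIdeal R⁰ (FractionRing R)))).prod ≤ 1 := by
  induction l using Multiset.induction with
  | empty => simp
  | cons N l ih =>
    rw [Multiset.map_cons, Multiset.prod_cons]
    calc (N : FractionalIdeal R⁰ (FractionRing R)) * _ ≤ 1 * 1 :=
      fi_mul_mono coeIdeal_le_one ih
    _ = 1 := one_mul _

theorem prod_le_mem {l : Multiset (Ideal R)} {N : Ideal R} (hN : N ∈ l) :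
    (l.map (fun M : Ideal R => (M : FractionalIdeal R⁰ (FractionRing R)))).prod ≤
      (N : FractionalIdeal R⁰ (FractionRing R)) := by
  obtain ⟨l', rfl⟩ := Multiset.exists_cons_of_mem hN
  rw [Multiset.map_cons, Multiset.prod_cons]
  calc (N : FractionalIdeal R⁰ (FractionRing R)) * _ ≤ ↑N * 1 := fi_mul_mono le_rfl prod_le_one
  _ = ↑N := mul_one _

theorem coe_prod (l : Multiset (Ideal R)) :
    (l.map (fun M : Ideal R => (M : FractionalIdeal R⁰ (FractionRing R)))).prod =
      ((l.prod : Ideal R) : FractionalIdeal R⁰ (FractionRing R)) := by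
  induction l using Multiset.induction with
  | empty => simp [Ideal.one_eq_top]
  | cons N l ih => simp [Multiset.map_cons, Multiset.prod_cons, coeIdeal_mul, ih]

theorem absorb_prod {P : Ideal R} {l : Multiset (Ideal R)} (h : ∀ N ∈ l, P * N = P) :
    P * l.prod = P := by
  induction l using Multiset.induction with
  | empty => simp [Ideal.one_eq_top, Ideal.mul_top]
  | cons N l ih =>
    rw [Multiset.prod_cons, ← mul_assoc, h N (Multiset.mem_cons_self N l)]
    exact ih fun N' h' => h N' (Multiset.mem_cons_of_mem h')

theorem one_le_one_div {A : FractionalIdeal R⁰ (FractionRing R)} (hA0 : A ≠ 0) (hA : A ≤ 1) :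
    (1 : FractionalIdeal R⁰ (FractionRing R)) ≤ 1 / A :=
  (le_div_iff_mul_le hA0).mpr (by rw [one_mul]; exact hA)

theorem one_div_ne_zero' {A : FractionalIdeal R⁰ (FractionRing R)} (hA0 : A ≠ 0) (hA : A ≤ 1) :
    1 / A ≠ 0 := fun h => by
  have h1 : (1 : FractionalIdeal R⁰ (FractionRing R)) ≤ 0 := h ▸ one_le_one_div hA0 hA
  have h2 : (1 : FractionRing R) ∈ (0 : FractionalIdeal R⁰ (FractionRing R)) :=
    h1 (one_mem_one _)
  rw [mem_zero_iff] at h2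
  exact one_ne_zero h2

/-- A nonzero nonmaximal prime in a Prüfer domain with weak factorization is divisorial. -/
theorem prime_div (hR : IsPruferDomain R) (hW : WeakFactorization R) {P : Ideal R}
    (hP : P.IsPrime) (hPnz : P ≠ ⊥) (hPnm : ¬ P.IsMaximal) :
    divClos R P = (P : FractionalIdeal R⁰ (FractionRing R)) := by
  obtain ⟨l, hmax, hfact⟩ := hW P hPnz
  rw [bridge] at hfact
  have hP0 : (P : FractionalIdeal R⁰ (FractionRing R)) ≠ 0 := coeIdeal_ne_zero.mpr hPnz
  have h1ne : (1 : FractionalIdeal R⁰ (FractionRing R)) ≠ 0 := one_ne_zero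
  have hdle : divClos R P ≤ 1 := by
    show 1 / (1 / (P : FractionalIdeal R⁰ (FractionRing R))) ≤ 1
    calc 1 / (1 / (P : FractionalIdeal R⁰ (FractionRing R))) ≤ 1 / 1 :=
      one_div_anti h1ne (one_le_one_div hP0 coeIdeal_le_one)
    _ = 1 := div_one
  obtain ⟨U, hU⟩ := le_one_iff_exists_coeIdeal.mp hdle
  have hPU : (P : FractionalIdeal R⁰ (FractionRing R)) ≤ ↑U := by
    rw [hfact, ← hU]
    calc (U : FractionalIdeal R⁰ (FractionRing R)) * _ ≤ ↑U * 1 := fi_mul_mono le_rfl prod_le_one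
    _ = ↑U := mul_one _
  have hPN : ∀ N ∈ l, P ≤ N := by
    intro N hN
    rw [← coeIdeal_le_coeIdeal (FractionRing R)]
    calc (P : FractionalIdeal R⁰ (FractionRing R)) = divClos R P * _ := hfact
    _ ≤ 1 * _ := fi_mul_mono (hU ▸ coeIdeal_le_one) le_rfl
    _ = _ := one_mul _
    _ ≤ (N : FractionalIdeal R⁰ (FractionRing R)) := prod_le_mem hN
  have hfactI : P = U * l.prod := by
    apply coeIdeal_injective (K := FractionRing R)
    show ((P : Ideal R) : FractionalIdeal R⁰ (FractionRing R)) =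
      ((U * l.prod : Ideal R) : FractionalIdeal R⁰ (FractionRing R))
    rw [coeIdeal_mul, ← coe_prod, hU]
    exact hfact
  have hprodP : ¬ l.prod ≤ P := by
    intro h
    obtain ⟨N, hN, hNP⟩ := (hP.multiset_prod_le).mp h
    have hNeq : N = P := le_antisymm hNP (hPN N hN)
    exact hPnm (hNeq ▸ hmax N hN)
  have hUP : U ≤ P := ((hP.mul_le).mp (hfactI ▸ le_rfl)).resolve_right hprodP
  have hUeq : U = P := le_antisymm hUP ((coeIdeal_le_coeIdeal (FractionRing R)).mp hPU)
  rw [← hU, hUeq]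

end Stmt8Aux

/-- A Prüfer domain with the weak factorization property has the weak trace property for
primary ideals: `Q Q⁻¹ = P` for every nonzero `P`-primary `Q` with `P` nonmaximal. -/
theorem stmt8 (hR : IsPruferDomain R) (hW : WeakFactorization R)
    (P Q : Ideal R) (hP : P.IsPrime) (hPnz : P ≠ ⊥) (hPnm : ¬ P.IsMaximal)
    (hQnz : Q ≠ ⊥) (hQ : Q.IsPrimary) (hrad : Q.radical = P) :
    (Q : FractionalIdeal R⁰ (FractionRing R)) *
        (1 / (Q : FractionalIdeal R⁰ (FractionRing R))) =
      (P : FractionalIdeal R⁰ (FractionRing R)) := by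
  have hq0 : (Q : FractionalIdeal R⁰ (FractionRing R)) ≠ 0 :=
    FractionalIdeal.coeIdeal_ne_zero.mpr hQnz
  set q : FractionalIdeal R⁰ (FractionRing R) := (Q : FractionalIdeal R⁰ (FractionRing R))
    with hqdef
  set D : FractionalIdeal R⁰ (FractionRing R) := 1 / q with hDdef
  have h1D : (1 : FractionalIdeal R⁰ (FractionRing R)) ≤ D :=
    Stmt8Aux.one_le_one_div hq0 FractionalIdeal.coeIdeal_le_one
  have ht1 : q * D ≤ 1 := by
    rw [hDdef, mul_comm]
    exact FractionalIdeal.mul_le.mpr fun i hi j hj =>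
      (FractionalIdeal.mem_div_iff_of_ne_zero hq0).mp hi j hj
  have hqt : q ≤ q * D := by
    calc q = q * 1 := (mul_one q).symm
    _ ≤ q * D := Stmt8Aux.fi_mul_mono le_rfl h1D
  have ht0 : q * D ≠ 0 := fun h => hq0 (le_antisymm (h ▸ hqt) (FractionalIdeal.zero_le _))
  have htP : q * D ≤ (P : FractionalIdeal R⁰ (FractionRing R)) :=
    Stmt8Aux.part1 hR hP hPnm hQnz hQ hrad
  have htv0 : 1 / (q * D) ≠ 0 := Stmt8Aux.one_div_ne_zero' ht0 ht1
  have hbeta : (P : FractionalIdeal R⁰ (FractionRing R)) ≤ 1 / (1 / (q * D)) := by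
    intro x hx
    obtain ⟨p, hp, rfl⟩ := (FractionalIdeal.mem_coeIdeal _).mp hx
    show algebraMap R (FractionRing R) p ∈ 1 / (1 / (q * D))
    rw [FractionalIdeal.mem_div_iff_of_ne_zero htv0]
    intro y hy
    rw [FractionalIdeal.mem_div_iff_of_ne_zero ht0] at hy
    have hyD : ∀ d ∈ D, y * d ∈ D := by
      intro d hd
      rw [hDdef, FractionalIdeal.mem_div_iff_of_ne_zero hq0]
      intro w hw
      have h1 : w * d ∈ q * D := FractionalIdeal.mul_mem_mul hw hd
      have h2 := hy _ h1
      have h3 : y * d * w = y * (w * d) := by ring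
      rw [h3]
      exact h2
    have hyk : ∀ k : ℕ, y ^ k ∈ D := by
      intro k
      induction k with
      | zero => rw [pow_zero]; exact h1D (FractionalIdeal.one_mem_one _)
      | succ k ih => rw [pow_succ, mul_comm]; exact hyD _ ih
    have hpQ : p ∈ Q.radical := hrad.symm ▸ hp
    obtain ⟨n, hn⟩ := Ideal.mem_radical_iff.mp hpQ
    have hn0 : n ≠ 0 := by
      rintro rfl
      rw [pow_zero] at hn
      exact hP.ne_top
        (by rw [← hrad, Ideal.radical_eq_top]; exact (Ideal.eq_top_iff_one Q).mpr hn)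
    have hpow : (algebraMap R (FractionRing R) p * y) ^ n ∈
        (1 : FractionalIdeal R⁰ (FractionRing R)) := by
      have h1 : algebraMap R (FractionRing R) (p ^ n) ∈ q :=
        (FractionalIdeal.mem_coeIdeal _).mpr ⟨p ^ n, hn, rfl⟩
      have h2 : algebraMap R (FractionRing R) (p ^ n) * y ^ n ∈ q * D :=
        FractionalIdeal.mul_mem_mul h1 (hyk n)
      have h3 := ht1 h2
      rw [mul_pow, ← _root_.map_pow]
      exact h3
    exact Stmt8Aux.pow_mem_one hR hn0 hpow
  have hPdiv : divClos R P = (P : FractionalIdeal R⁰ (FractionRing R)) :=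
    Stmt8Aux.prime_div hR hW hP hPnz hPnm
  have htvP : 1 / (1 / (q * D)) ≤ (P : FractionalIdeal R⁰ (FractionRing R)) := by
    have h1 : 1 / (P : FractionalIdeal R⁰ (FractionRing R)) ≤ 1 / (q * D) :=
      Stmt8Aux.one_div_anti ht0 htP
    have hPd0 : 1 / (P : FractionalIdeal R⁰ (FractionRing R)) ≠ 0 :=
      Stmt8Aux.one_div_ne_zero' (FractionalIdeal.coeIdeal_ne_zero.mpr hPnz)
        FractionalIdeal.coeIdeal_le_one
    calc 1 / (1 / (q * D)) ≤ 1 / (1 / (P : FractionalIdeal R⁰ (FractionRing R))) :=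
      Stmt8Aux.one_div_anti hPd0 h1
    _ = (P : FractionalIdeal R⁰ (FractionRing R)) := hPdiv
  have htv : 1 / (1 / (q * D)) = (P : FractionalIdeal R⁰ (FractionRing R)) :=
    le_antisymm htvP hbeta
  obtain ⟨T, hT⟩ := FractionalIdeal.le_one_iff_exists_coeIdeal.mp ht1
  have hTne : T ≠ ⊥ := FractionalIdeal.coeIdeal_ne_zero.mp (by rw [hT]; exact ht0)
  obtain ⟨l, hmax, hfact⟩ := hW T hTne
  rw [Stmt8Aux.bridge] at hfact
  have hdT : divClos R T = (P : FractionalIdeal R⁰ (FractionRing R)) := by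
    show 1 / (1 / ((T : Ideal R) : FractionalIdeal R⁰ (FractionRing R))) = _
    rw [hT, htv]
  rw [hT, hdT] at hfact
  have habs : ∀ N ∈ l, P * N = P := by
    intro N hN
    have hQN : Q ≤ N := by
      rw [← FractionalIdeal.coeIdeal_le_coeIdeal (FractionRing R)]
      calc (Q : FractionalIdeal R⁰ (FractionRing R)) ≤ q * D := hqt
      _ = ↑P * _ := hfact
      _ ≤ 1 * _ := Stmt8Aux.fi_mul_mono FractionalIdeal.coeIdeal_le_one le_rfl
      _ = _ := one_mul _
      _ ≤ (N : FractionalIdeal R⁰ (FractionRing R)) := Stmt8Aux.prod_le_mem hN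
    have hPleN : P ≤ N := by
      rw [← hrad, ← (hmax N hN).isPrime.radical]
      exact Ideal.radical_mono hQN
    have hne : P ≠ N := fun e => hPnm (e ▸ hmax N hN)
    obtain ⟨n', hn'N, hn'P⟩ := SetLike.exists_of_lt (lt_of_le_of_ne hPleN hne)
    exact Stmt8Aux.absorb hR hP.isPrimary hP.radical hPleN hn'N hn'P
  have hfin : ((P : Ideal R) : FractionalIdeal R⁰ (FractionRing R)) *
      (l.map (fun M : Ideal R => (M : FractionalIdeal R⁰ (FractionRing R)))).prod =
        (P : FractionalIdeal R⁰ (FractionRing R)) := by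
    rw [Stmt8Aux.coe_prod, ← FractionalIdeal.coeIdeal_mul, Stmt8Aux.absorb_prod habs]
  exact hfact.trans hfin
end
end

section
/- Let R be a Prüfer domain with the strong factorization property. Then a nonzero ideal I of R is divisorial if and only if I R_M is divisorial in R_M for every maximal ideal M of R. -/
open scoped nonZeroDivisors

noncomputable section

variable (R : Type*) [CommRing R] [IsDomain R]

section Aux

variable {R}

theorem prufer_pair (hR : IsPruferDomain R) {M : Ideal R} (hMmax : M.IsMaximal)
    (a b : R) : ∃ s ∉ M, (∃ c, s * b = c * a) ∨ (∃ c, s * a = c * b) := by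
  classical
  have h1M : (1 : R) ∉ M := (Ideal.ne_top_iff_one M).mp hMmax.ne_top
  by_cases ha : a = 0
  · exact ⟨1, h1M, Or.inr ⟨0, by rw [ha, mul_zero, zero_mul]⟩⟩
  by_cases hb : b = 0
  · exact ⟨1, h1M, Or.inl ⟨0, by rw [hb, mul_zero, zero_mul]⟩⟩
  set K := FractionRing R with hK
  have hspan : Ideal.span {a, b} ≠ (⊥ : Ideal R) := fun h =>
    ha ((Submodule.mem_bot R).mp (h ▸ Ideal.subset_span (Set.mem_insert _ _)))
  obtain ⟨u, hu⟩ := hR _ hspan ⟨{a, b}, by simp⟩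
  set J' : FractionalIdeal R⁰ K := ((Ideal.span {a, b} : Ideal R) : FractionalIdeal R⁰ K) with hJ'
  set X : FractionalIdeal R⁰ K := ((u⁻¹ : (FractionalIdeal R⁰ K)ˣ) : FractionalIdeal R⁰ K)
    with hX
  have hJX : J' * X = 1 := by rw [← hu]; exact u.mul_inv
  have h1 : (1 : K) ∈ J' * X := by rw [hJX]; exact FractionalIdeal.one_mem_one _
  have hsm : ∀ (c : R) (z : K), z ∈ X → algebraMap R K c * z ∈ X := by
    intro c z hz
    rw [← Algebra.smul_def]
    exact Submodule.smul_mem (X : Submodule R K) c hz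
  have hmain : ∃ x y : K, x ∈ X ∧ y ∈ X ∧
      (1 : K) = algebraMap R K a * x + algebraMap R K b * y := by
    refine FractionalIdeal.mul_induction_on h1 ?_ ?_
    · intro i hi j hj
      obtain ⟨r, hrJ, rfl⟩ := (FractionalIdeal.mem_coeIdeal _).mp hi
      obtain ⟨c, d, hcd⟩ := Ideal.mem_span_pair.mp hrJ
      refine ⟨algebraMap R K c * j, algebraMap R K d * j, hsm c j hj, hsm d j hj, ?_⟩
      rw [← hcd, map_add, map_mul, map_mul]
      ring
    · rintro p q ⟨x₁, y₁, hx₁, hy₁, h₁⟩ ⟨x₂, y₂, hx₂, hy₂, h₂⟩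
      exact ⟨x₁ + x₂, y₁ + y₂, Submodule.add_mem (X : Submodule R K) hx₁ hx₂,
        Submodule.add_mem (X : Submodule R K) hy₁ hy₂, by rw [h₁, h₂]; ring⟩
  obtain ⟨x, y, hx, hy, hxy⟩ := hmain
  have haJ : algebraMap R K a ∈ J' :=
    (FractionalIdeal.mem_coeIdeal _).mpr ⟨a, Ideal.subset_span (Set.mem_insert _ _), rfl⟩
  have hbJ : algebraMap R K b ∈ J' :=
    (FractionalIdeal.mem_coeIdeal _).mpr
      ⟨b, Ideal.subset_span (Set.mem_insert_of_mem _ rfl), rfl⟩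
  have pm : ∀ {p q : K}, p ∈ J' → q ∈ X → p * q ∈ (1 : FractionalIdeal R⁰ K) := by
    intro p q hp hq
    rw [← hJX]
    exact FractionalIdeal.mul_mem_mul hp hq
  obtain ⟨e, he⟩ := (FractionalIdeal.mem_one_iff _).mp (pm haJ hx)
  obtain ⟨f, hf⟩ := (FractionalIdeal.mem_one_iff _).mp (pm hbJ hy)
  obtain ⟨g, hg⟩ := (FractionalIdeal.mem_one_iff _).mp (pm haJ hy)
  obtain ⟨g', hg'⟩ := (FractionalIdeal.mem_one_iff _).mp (pm hbJ hx)
  have hef : e + f = 1 := by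
    apply IsFractionRing.injective R K
    rw [map_add, he, hf, map_one, ← hxy]
  by_cases heM : e ∈ M
  · have hfM : f ∉ M := fun hfM => h1M (hef ▸ M.add_mem heM hfM)
    refine ⟨f, hfM, Or.inr ⟨g, ?_⟩⟩
    apply IsFractionRing.injective R K
    rw [map_mul, map_mul, hf, hg]
    ring
  · refine ⟨e, heM, Or.inl ⟨g', ?_⟩⟩
    apply IsFractionRing.injective R K
    rw [map_mul, map_mul, he, hg']
    ring

theorem val_prop (hR : IsPruferDomain R) {M : Ideal R} (hMmax : M.IsMaximal) [hMp : M.IsPrime]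
    (x : FractionRing R) :
    x ∈ (1 : FractionalIdeal (Localization.AtPrime M)⁰ (FractionRing R)) ∨
      x⁻¹ ∈ (1 : FractionalIdeal (Localization.AtPrime M)⁰ (FractionRing R)) := by
  have key : ∀ (z : FractionRing R) (r s : R), s ∉ M →
      z * algebraMap R (FractionRing R) s = algebraMap R (FractionRing R) r →
      z ∈ (1 : FractionalIdeal (Localization.AtPrime M)⁰ (FractionRing R)) := by
    intro z r s hs hz
    have hs0 : s ≠ 0 := fun h => hs (h ▸ M.zero_mem)
    have hsK : algebraMap R (FractionRing R) s ≠ 0 :=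
      IsFractionRing.to_map_ne_zero_of_mem_nonZeroDivisors (mem_nonZeroDivisors_of_ne_zero hs0)
    have hw : IsLocalization.mk' (Localization.AtPrime M) r (⟨s, hs⟩ : M.primeCompl) *
        algebraMap R (Localization.AtPrime M) s = algebraMap R (Localization.AtPrime M) r :=
      IsLocalization.mk'_spec _ r _
    have hw' : algebraMap (Localization.AtPrime M) (FractionRing R)
          (IsLocalization.mk' (Localization.AtPrime M) r (⟨s, hs⟩ : M.primeCompl)) *
        algebraMap R (FractionRing R) s = algebraMap R (FractionRing R) r := by
      rw [IsScalarTower.algebraMap_apply R (Localization.AtPrime M) (FractionRing R) s,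
        IsScalarTower.algebraMap_apply R (Localization.AtPrime M) (FractionRing R) r,
        ← map_mul, hw]
    refine (FractionalIdeal.mem_one_iff _).mpr
      ⟨IsLocalization.mk' (Localization.AtPrime M) r (⟨s, hs⟩ : M.primeCompl), ?_⟩
    exact mul_right_cancel₀ hsK (hw'.trans hz.symm)
  obtain ⟨a, b, hb, hx⟩ := IsFractionRing.div_surjective (A := R) x
  have hbK : algebraMap R (FractionRing R) b ≠ 0 :=
    IsFractionRing.to_map_ne_zero_of_mem_nonZeroDivisors hb
  by_cases ha : a = 0
  · left
    rw [← hx, ha, map_zero, zero_div]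
    exact Submodule.zero_mem ((1 : FractionalIdeal (Localization.AtPrime M)⁰
      (FractionRing R)) : Submodule (Localization.AtPrime M) (FractionRing R))
  have haK : algebraMap R (FractionRing R) a ≠ 0 := fun h =>
    ha (IsFractionRing.injective R (FractionRing R) (h.trans (map_zero _).symm))
  obtain ⟨s, hs, hcase⟩ := prufer_pair hR hMmax a b
  rcases hcase with ⟨c, hc⟩ | ⟨c, hc⟩
  · right
    refine key _ c s hs ?_
    rw [← hx, inv_div, div_mul_eq_mul_div, div_eq_iff haK, ← map_mul, ← map_mul]
    exact congrArg (algebraMap R (FractionRing R)) (by linear_combination hc)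
  · left
    refine key _ c s hs ?_
    rw [← hx, div_mul_eq_mul_div, div_eq_iff hbK, ← map_mul, ← map_mul]
    exact congrArg (algebraMap R (FractionRing R)) (by linear_combination hc)

theorem local_key (hR : IsPruferDomain R) {M : Ideal R} (hMmax : M.IsMaximal) [hMp : M.IsPrime]
    (A : Ideal (Localization.AtPrime M)) (hA0 : A ≠ ⊥)
    (hAnd : 1 / (1 / (A : FractionalIdeal (Localization.AtPrime M)⁰ (FractionRing R))) ≠
      (A : FractionalIdeal (Localization.AtPrime M)⁰ (FractionRing R))) :
    1 / ((IsLocalRing.maximalIdeal (Localization.AtPrime M) :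
        Ideal (Localization.AtPrime M)) :
      FractionalIdeal (Localization.AtPrime M)⁰ (FractionRing R)) = 1 := by
  set X : FractionalIdeal (Localization.AtPrime M)⁰ (FractionRing R) :=
    (A : FractionalIdeal (Localization.AtPrime M)⁰ (FractionRing R)) with hXdef
  set N' : FractionalIdeal (Localization.AtPrime M)⁰ (FractionRing R) :=
    ((IsLocalRing.maximalIdeal (Localization.AtPrime M) : Ideal (Localization.AtPrime M)) :
      FractionalIdeal (Localization.AtPrime M)⁰ (FractionRing R)) with hNdef
  have hX0 : X ≠ 0 := FractionalIdeal.coeIdeal_ne_zero.mpr hA0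
  have hAtop : A ≠ ⊤ := by
    rintro rfl
    exact hAnd (by rw [hXdef, FractionalIdeal.coeIdeal_top, FractionalIdeal.div_one,
      FractionalIdeal.div_one])
  have hAN : A ≤ IsLocalRing.maximalIdeal (Localization.AtPrime M) :=
    IsLocalRing.le_maximalIdeal hAtop
  have hN0 : N' ≠ 0 :=
    FractionalIdeal.coeIdeal_ne_zero.mpr fun h => hA0 (le_bot_iff.mp (h ▸ hAN))
  have hone_le : (1 : FractionalIdeal (Localization.AtPrime M)⁰ (FractionRing R)) ≤ 1 / N' :=
    (FractionalIdeal.le_div_iff_mul_le hN0).mpr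
      (by rw [one_mul]; exact FractionalIdeal.coeIdeal_le_one)
  have hinv : ∀ w : Localization.AtPrime M, IsUnit w →
      (algebraMap (Localization.AtPrime M) (FractionRing R) w)⁻¹ ∈
        (1 : FractionalIdeal (Localization.AtPrime M)⁰ (FractionRing R)) := by
    intro w hw
    refine (FractionalIdeal.mem_one_iff _).mpr ⟨((hw.unit⁻¹ : _) : Localization.AtPrime M), ?_⟩
    exact eq_inv_of_mul_eq_one_left (by rw [← map_mul, hw.val_inv_mul, map_one])
  refine le_antisymm ?_ hone_le
  intro u hu
  by_contra hu1
  have hu0 : u ≠ 0 := fun h => hu1 (h ▸ Submodule.zero_mem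
    ((1 : FractionalIdeal (Localization.AtPrime M)⁰ (FractionRing R)) :
      Submodule (Localization.AtPrime M) (FractionRing R)))
  have hmemN : ∀ y ∈ N', u * y ∈
      (1 : FractionalIdeal (Localization.AtPrime M)⁰ (FractionRing R)) :=
    fun y hy => (FractionalIdeal.mem_div_iff_of_ne_zero hN0).mp hu y hy
  rcases val_prop hR hMmax u with h | h
  · exact hu1 h
  obtain ⟨v, hv⟩ := (FractionalIdeal.mem_one_iff _).mp h
  have hv0 : v ≠ 0 := by
    rintro rfl
    rw [map_zero] at hv
    exact hu0 (inv_eq_zero.mp hv.symm)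
  have hvN : v ∈ IsLocalRing.maximalIdeal (Localization.AtPrime M) := by
    by_contra hvnu
    rw [IsLocalRing.notMem_maximalIdeal] at hvnu
    have h2 := hinv v hvnu
    rw [hv, inv_inv] at h2
    exact hu1 h2
  have hNspan : N' = FractionalIdeal.spanSingleton (Localization.AtPrime M)⁰ u⁻¹ := by
    apply le_antisymm
    · intro t ht
      obtain ⟨n, hn, hnt⟩ := (FractionalIdeal.mem_coeIdeal _).mp ht
      obtain ⟨w, hw⟩ := (FractionalIdeal.mem_one_iff _).mp (hmemN t ht)
      refine (FractionalIdeal.mem_spanSingleton _).mpr ⟨w, ?_⟩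
      rw [Algebra.smul_def, hw, mul_comm u, mul_assoc, mul_inv_cancel₀ hu0, mul_one]
    · exact FractionalIdeal.spanSingleton_le_iff_mem.mpr
        ((FractionalIdeal.mem_coeIdeal _).mpr ⟨v, hvN, hv⟩)
  have h1le : (1 : FractionalIdeal (Localization.AtPrime M)⁰ (FractionRing R)) ≤ 1 / X :=
    (FractionalIdeal.le_div_iff_mul_le hX0).mpr
      (by rw [one_mul]; exact FractionalIdeal.coeIdeal_le_one)
  have h1X0 : (1 : FractionalIdeal (Localization.AtPrime M)⁰ (FractionRing R)) / X ≠ 0 := by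
    intro h
    have h10 : (1 : FractionalIdeal (Localization.AtPrime M)⁰ (FractionRing R)) = 0 :=
      le_antisymm (h ▸ h1le) (FractionalIdeal.zero_le _)
    have htop : ((⊤ : Ideal (Localization.AtPrime M)) :
        FractionalIdeal (Localization.AtPrime M)⁰ (FractionRing R)) ≠ 0 :=
      FractionalIdeal.coeIdeal_ne_zero.mpr fun h' => one_ne_zero
        (α := Localization.AtPrime M) ((Submodule.mem_bot _).mp (h' ▸ Submodule.mem_top))
    rw [FractionalIdeal.coeIdeal_top] at htop
    exact htop h10
  have hmulX : X * (1 / X) ≤ 1 := by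
    have h2 := (FractionalIdeal.le_div_iff_mul_le hX0).mp (le_refl (1 / X))
    rwa [mul_comm] at h2
  have hXle : X ≤ 1 / (1 / X) := (FractionalIdeal.le_div_iff_mul_le h1X0).mpr hmulX
  have hnotle : ¬(1 / (1 / X) ≤ X) := fun hle => hAnd (le_antisymm hle hXle)
  obtain ⟨aK, haD, haX⟩ := SetLike.not_le_iff_exists.mp hnotle
  have ha0 : aK ≠ 0 := fun h => haX (h ▸ Submodule.zero_mem
    (X : Submodule (Localization.AtPrime M) (FractionRing R)))
  have hXT : X ≤ FractionalIdeal.spanSingleton (Localization.AtPrime M)⁰ (aK * u⁻¹) := by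
    intro t ht
    by_cases ht0 : t = 0
    · exact ht0 ▸ Submodule.zero_mem
        ((FractionalIdeal.spanSingleton (Localization.AtPrime M)⁰ (aK * u⁻¹)) :
          Submodule (Localization.AtPrime M) (FractionRing R))
    rcases val_prop hR hMmax (aK⁻¹ * t) with h' | h'
    · obtain ⟨w, hw⟩ := (FractionalIdeal.mem_one_iff _).mp h'
      by_cases hwu : IsUnit w
      · exfalso
        apply haX
        have hEq : aK = ((hwu.unit⁻¹ : _) : Localization.AtPrime M) • t := by
          rw [Algebra.smul_def]
          have h2 : algebraMap (Localization.AtPrime M) (FractionRing R)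
              ((hwu.unit⁻¹ : _) : Localization.AtPrime M) =
              (algebraMap (Localization.AtPrime M) (FractionRing R) w)⁻¹ :=
            eq_inv_of_mul_eq_one_left (by rw [← map_mul, hwu.val_inv_mul, map_one])
          rw [h2, hw, mul_inv, inv_inv, mul_assoc, inv_mul_cancel₀ ht0, mul_one]
        rw [hEq]
        exact Submodule.smul_mem
          (X : Submodule (Localization.AtPrime M) (FractionRing R)) _ ht
      · have hwN : algebraMap (Localization.AtPrime M) (FractionRing R) w ∈ N' :=
          (FractionalIdeal.mem_coeIdeal _).mpr
            ⟨w, (IsLocalRing.mem_maximalIdeal _).mpr hwu, rfl⟩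
        rw [hNspan] at hwN
        obtain ⟨z, hz⟩ := (FractionalIdeal.mem_spanSingleton _).mp hwN
        refine (FractionalIdeal.mem_spanSingleton _).mpr ⟨z, ?_⟩
        rw [Algebra.smul_def] at hz ⊢
        have h3 : algebraMap (Localization.AtPrime M) (FractionRing R) z * u⁻¹ = aK⁻¹ * t := by
          rw [hz, hw]
        calc algebraMap (Localization.AtPrime M) (FractionRing R) z * (aK * u⁻¹)
            = aK * (algebraMap (Localization.AtPrime M) (FractionRing R) z * u⁻¹) := by ring
          _ = aK * (aK⁻¹ * t) := by rw [h3]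
          _ = t := by rw [← mul_assoc, mul_inv_cancel₀ ha0, one_mul]
    · exfalso
      apply haX
      obtain ⟨w, hw⟩ := (FractionalIdeal.mem_one_iff _).mp h'
      have hEq : aK = w • t := by
        rw [Algebra.smul_def, hw, mul_inv, inv_inv, mul_assoc, inv_mul_cancel₀ ht0, mul_one]
      rw [hEq]
      exact Submodule.smul_mem (X : Submodule (Localization.AtPrime M) (FractionRing R)) _ ht
  have hau0 : aK * u⁻¹ ≠ 0 := mul_ne_zero ha0 (inv_ne_zero hu0)
  have hsS0 : FractionalIdeal.spanSingleton (Localization.AtPrime M)⁰ (aK * u⁻¹) ≠ 0 :=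
    FractionalIdeal.spanSingleton_ne_zero_iff.mpr hau0
  have h1sS : (1 : FractionalIdeal (Localization.AtPrime M)⁰ (FractionRing R)) /
      FractionalIdeal.spanSingleton (Localization.AtPrime M)⁰ (aK * u⁻¹) ≤ 1 / X :=
    (FractionalIdeal.le_div_iff_mul_le hX0).mpr
      (le_trans (mul_le_mul_right hXT _)
        ((FractionalIdeal.le_div_iff_mul_le hsS0).mp le_rfl))
  have h1sS0 : (1 : FractionalIdeal (Localization.AtPrime M)⁰ (FractionRing R)) /
      FractionalIdeal.spanSingleton (Localization.AtPrime M)⁰ (aK * u⁻¹) ≠ 0 := by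
    rw [FractionalIdeal.one_div_spanSingleton]
    exact FractionalIdeal.spanSingleton_ne_zero_iff.mpr (inv_ne_zero hau0)
  have anti : 1 / (1 / X) ≤ 1 / (1 / FractionalIdeal.spanSingleton
      (Localization.AtPrime M)⁰ (aK * u⁻¹)) :=
    (FractionalIdeal.le_div_iff_mul_le h1sS0).mpr
      (le_trans (mul_le_mul_right h1sS _)
        ((FractionalIdeal.le_div_iff_mul_le h1X0).mp le_rfl))
  have hcomp : 1 / (1 / FractionalIdeal.spanSingleton (Localization.AtPrime M)⁰ (aK * u⁻¹)) =
      FractionalIdeal.spanSingleton (Localization.AtPrime M)⁰ (aK * u⁻¹) := by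
    rw [FractionalIdeal.one_div_spanSingleton, FractionalIdeal.one_div_spanSingleton, inv_inv]
  rw [hcomp] at anti
  obtain ⟨z, hz⟩ := (FractionalIdeal.mem_spanSingleton _).mp (anti haD)
  apply hu1
  refine (FractionalIdeal.mem_one_iff _).mpr ⟨z, ?_⟩
  rw [Algebra.smul_def] at hz
  calc algebraMap (Localization.AtPrime M) (FractionRing R) z
      = algebraMap (Localization.AtPrime M) (FractionRing R) z *
        ((aK * aK⁻¹) * (u⁻¹ * u)) := by
        rw [mul_inv_cancel₀ ha0, inv_mul_cancel₀ hu0, mul_one, mul_one]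
    _ = (algebraMap (Localization.AtPrime M) (FractionRing R) z * (aK * u⁻¹)) *
        (aK⁻¹ * u) := by ring
    _ = aK * (aK⁻¹ * u) := by rw [hz]
    _ = u * (aK * aK⁻¹) := by ring
    _ = u := by rw [mul_inv_cancel₀ ha0, mul_one]

theorem divisorialAt_iff_K {M : Ideal R} [hMp : M.IsPrime]
    (A : Ideal (Localization.AtPrime M)) :
    Divisorial (Localization.AtPrime M) A ↔
      1 / (1 / (A : FractionalIdeal (Localization.AtPrime M)⁰ (FractionRing R))) =
        (A : FractionalIdeal (Localization.AtPrime M)⁰ (FractionRing R)) := by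
  letI : Algebra (Localization.AtPrime M) (FractionRing (Localization.AtPrime M)) :=
    OreLocalization.instAlgebra
  have e := FractionRing.algEquiv (Localization.AtPrime M) (FractionRing R)
  constructor
  · intro h
    have h' : divClos (Localization.AtPrime M) A =
        (A : FractionalIdeal (Localization.AtPrime M)⁰
          (FractionRing (Localization.AtPrime M))) := h
    unfold divClos at h'
    have h2 := congrArg (FractionalIdeal.map
      (e : FractionRing (Localization.AtPrime M) →ₐ[Localization.AtPrime M] FractionRing R)) h'
    rwa [FractionalIdeal.map_div, FractionalIdeal.map_div, FractionalIdeal.map_one,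
      FractionalIdeal.map_coeIdeal] at h2
  · intro h
    have h2 := congrArg (FractionalIdeal.map
      ((e.symm : FractionRing R ≃ₐ[Localization.AtPrime M]
        FractionRing (Localization.AtPrime M)) :
        FractionRing R →ₐ[Localization.AtPrime M] FractionRing (Localization.AtPrime M))) h
    rw [FractionalIdeal.map_div, FractionalIdeal.map_div, FractionalIdeal.map_one,
      FractionalIdeal.map_coeIdeal] at h2
    show divClos (Localization.AtPrime M) A =
      (A : FractionalIdeal (Localization.AtPrime M)⁰ (FractionRing (Localization.AtPrime M)))
    unfold divClos
    exact h2

theorem mapAt_ne_bot {M : Ideal R} [hMp : M.IsPrime] {I : Ideal R} (hI : I ≠ ⊥) :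
    Ideal.map (algebraMap R (Localization.AtPrime M)) I ≠ ⊥ := by
  intro h
  obtain ⟨a, haI, ha0⟩ := Submodule.exists_mem_ne_zero_of_ne_bot hI
  have h2 : algebraMap R (Localization.AtPrime M) a = 0 := by
    have := h ▸ Ideal.mem_map_of_mem (algebraMap R (Localization.AtPrime M)) haI
    exact (Submodule.mem_bot _).mp this
  exact ha0 (IsLocalization.injective (Localization.AtPrime M)
    M.primeCompl_le_nonZeroDivisors (by rw [h2, map_zero]))

end Aux

/-- In a Prüfer domain with the strong factorization property, a nonzero ideal is divisorial
iff it is locally divisorial at every maximal ideal. -/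
theorem stmt9 (hR : IsPruferDomain R) (hS : StrongFactorization R)
    (I : Ideal R) (hI : I ≠ ⊥) :
    Divisorial R I ↔ ∀ (M : Ideal R) (hM : M.IsMaximal), DivisorialAt R M hM.isPrime I := by
  classical
  constructor
  · intro hdiv M hM
    haveI hMp : M.IsPrime := hM.isPrime
    have hdiv' : divClos R I = (I : FractionalIdeal R⁰ (FractionRing R)) := hdiv
    by_contra hnd
    obtain ⟨S, hSeq, hfac, hirr⟩ := hS I hI
    rw [hdiv'] at hfac
    have hprod_le_one : ∀ T : Finset (Ideal R),
        (∏ N ∈ T, (N : FractionalIdeal R⁰ (FractionRing R))) ≤ 1 := by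
      intro T
      refine Finset.prod_induction _ (· ≤ 1) (fun a b ha hb => ?_) le_rfl
        (fun N _ => FractionalIdeal.coeIdeal_le_one)
      calc a * b ≤ a * 1 := mul_le_mul_right hb a
        _ = a := mul_one a
        _ ≤ 1 := ha
    have hSempty : S = ∅ := by
      rcases Finset.eq_empty_or_nonempty S with h | ⟨M₀, hM₀⟩
      · exact h
      exfalso
      refine hirr M₀ hM₀ ?_
      rw [hdiv']
      have hfac2 : (I : FractionalIdeal R⁰ (FractionRing R)) =
          (I : FractionalIdeal R⁰ (FractionRing R)) *
            ((M₀ : FractionalIdeal R⁰ (FractionRing R)) *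
              ∏ N ∈ S.erase M₀, (N : FractionalIdeal R⁰ (FractionRing R))) := by
        rw [Finset.mul_prod_erase _ _ hM₀]
        exact hfac
      apply le_antisymm
      · calc (I : FractionalIdeal R⁰ (FractionRing R))
            = (I : FractionalIdeal R⁰ (FractionRing R)) *
              ((M₀ : FractionalIdeal R⁰ (FractionRing R)) *
                ∏ N ∈ S.erase M₀, (N : FractionalIdeal R⁰ (FractionRing R))) := hfac2
          _ = ((I : FractionalIdeal R⁰ (FractionRing R)) *
                ∏ N ∈ S.erase M₀, (N : FractionalIdeal R⁰ (FractionRing R))) *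
              (M₀ : FractionalIdeal R⁰ (FractionRing R)) := by ring
          _ ≤ ((I : FractionalIdeal R⁰ (FractionRing R)) *
                ∏ N ∈ S.erase M₀, (N : FractionalIdeal R⁰ (FractionRing R))) * 1 :=
            mul_le_mul_right FractionalIdeal.coeIdeal_le_one _
          _ = (I : FractionalIdeal R⁰ (FractionRing R)) *
                ∏ N ∈ S.erase M₀, (N : FractionalIdeal R⁰ (FractionRing R)) := mul_one _
      · calc (I : FractionalIdeal R⁰ (FractionRing R)) *
              ∏ N ∈ S.erase M₀, (N : FractionalIdeal R⁰ (FractionRing R))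
            ≤ (I : FractionalIdeal R⁰ (FractionRing R)) * 1 :=
            mul_le_mul_right (hprod_le_one _) _
          _ = (I : FractionalIdeal R⁰ (FractionRing R)) := mul_one _
    have hMSet : MSet R I = ∅ := by rw [← hSeq, hSempty, Finset.coe_empty]
    by_cases hIM : I ≤ M
    · have hnd' : ¬ Divisorial (Localization.AtPrime M) (MapAt R M hM.isPrime I) := hnd
      have hndK : 1 / (1 / ((MapAt R M hM.isPrime I :
            Ideal (Localization.AtPrime M)) :
            FractionalIdeal (Localization.AtPrime M)⁰ (FractionRing R))) ≠
          ((MapAt R M hM.isPrime I : Ideal (Localization.AtPrime M)) :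
            FractionalIdeal (Localization.AtPrime M)⁰ (FractionRing R)) :=
        fun h => hnd' ((divisorialAt_iff_K _).mpr h)
      have hAbot : (MapAt R M hM.isPrime I : Ideal (Localization.AtPrime M)) ≠ ⊥ :=
        mapAt_ne_bot hI
      have hloc := local_key hR hM (MapAt R M hM.isPrime I : Ideal (Localization.AtPrime M))
        hAbot hndK
      have hM0 : ((M : Ideal R) : FractionalIdeal R⁰ (FractionRing R)) ≠ 0 :=
        FractionalIdeal.coeIdeal_ne_zero.mpr fun h => hI (le_bot_iff.mp (h ▸ hIM))
      have h1M : (1 : FractionalIdeal R⁰ (FractionRing R)) /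
          (M : FractionalIdeal R⁰ (FractionRing R)) = 1 := by
        refine le_antisymm ?_ ((FractionalIdeal.le_div_iff_mul_le hM0).mpr
          (by rw [one_mul]; exact FractionalIdeal.coeIdeal_le_one))
        intro u hu
        have huM : ∀ m ∈ M, u * algebraMap R (FractionRing R) m ∈
            (1 : FractionalIdeal R⁰ (FractionRing R)) := fun m hm =>
          (FractionalIdeal.mem_div_iff_of_ne_zero hM0).mp hu _
            ((FractionalIdeal.mem_coeIdeal _).mpr ⟨m, hm, rfl⟩)
        have hMapLe : Ideal.map (algebraMap R (Localization.AtPrime M)) I ≤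
            IsLocalRing.maximalIdeal (Localization.AtPrime M) :=
          Ideal.map_le_iff_le_comap.mpr
            (hIM.trans (Localization.AtPrime.under_maximalIdeal (I := M)).ge)
        have hNV0 : ((IsLocalRing.maximalIdeal (Localization.AtPrime M) :
              Ideal (Localization.AtPrime M)) :
            FractionalIdeal (Localization.AtPrime M)⁰ (FractionRing R)) ≠ 0 :=
          FractionalIdeal.coeIdeal_ne_zero.mpr fun h =>
            mapAt_ne_bot (M := M) hI (le_bot_iff.mp (h ▸ hMapLe))
        have huNV : u ∈ (1 : FractionalIdeal (Localization.AtPrime M)⁰ (FractionRing R)) /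
            ((IsLocalRing.maximalIdeal (Localization.AtPrime M) :
                Ideal (Localization.AtPrime M)) :
              FractionalIdeal (Localization.AtPrime M)⁰ (FractionRing R)) := by
          refine (FractionalIdeal.mem_div_iff_of_ne_zero hNV0).mpr ?_
          intro y hy
          obtain ⟨n, hn, hny⟩ := (FractionalIdeal.mem_coeIdeal _).mp hy
          rw [← Localization.AtPrime.map_eq_maximalIdeal] at hn
          suffices hgoal : u * algebraMap (Localization.AtPrime M) (FractionRing R) n ∈
              (1 : FractionalIdeal (Localization.AtPrime M)⁰ (FractionRing R)) by
            rwa [hny] at hgoal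
          have hn' : n ∈ Ideal.span ((algebraMap R (Localization.AtPrime M)) '' M) := hn
          refine Submodule.span_induction ?_ ?_ ?_ ?_ hn'
          · rintro _ ⟨m, hm, rfl⟩
            rw [← IsScalarTower.algebraMap_apply R (Localization.AtPrime M) (FractionRing R)]
            obtain ⟨r, hr⟩ := (FractionalIdeal.mem_one_iff _).mp (huM m hm)
            refine (FractionalIdeal.mem_one_iff _).mpr ⟨algebraMap R (Localization.AtPrime M) r, ?_⟩
            rw [← IsScalarTower.algebraMap_apply R (Localization.AtPrime M) (FractionRing R), hr]
          · rw [map_zero, mul_zero]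
            exact Submodule.zero_mem
              ((1 : FractionalIdeal (Localization.AtPrime M)⁰ (FractionRing R)) :
                Submodule (Localization.AtPrime M) (FractionRing R))
          · intro p q _ _ hp hq
            rw [map_add, mul_add]
            exact Submodule.add_mem
              ((1 : FractionalIdeal (Localization.AtPrime M)⁰ (FractionRing R)) :
                Submodule (Localization.AtPrime M) (FractionRing R)) hp hq
          · intro c p _ hp
            rw [smul_eq_mul, map_mul, mul_left_comm, ← Algebra.smul_def]
            exact Submodule.smul_mem
              ((1 : FractionalIdeal (Localization.AtPrime M)⁰ (FractionRing R)) :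
                Submodule (Localization.AtPrime M) (FractionRing R)) c hp
        rw [hloc] at huNV
        obtain ⟨v, hv⟩ := (FractionalIdeal.mem_one_iff _).mp huNV
        set D : Ideal R :=
          { carrier := {r : R | u * algebraMap R (FractionRing R) r ∈
              (1 : FractionalIdeal R⁰ (FractionRing R))}
            add_mem' := fun {p q} hp hq => by
              simp only [Set.mem_setOf_eq, map_add, mul_add] at *
              exact Submodule.add_mem
                ((1 : FractionalIdeal R⁰ (FractionRing R)) : Submodule R (FractionRing R)) hp hq
            zero_mem' := by
              simp only [Set.mem_setOf_eq, map_zero, mul_zero]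
              exact Submodule.zero_mem
                ((1 : FractionalIdeal R⁰ (FractionRing R)) : Submodule R (FractionRing R))
            smul_mem' := fun c r hr => by
              simp only [Set.mem_setOf_eq, smul_eq_mul, map_mul] at *
              rw [mul_left_comm, ← Algebra.smul_def]
              exact Submodule.smul_mem
                ((1 : FractionalIdeal R⁰ (FractionRing R)) : Submodule R (FractionRing R))
                c hr } with hDdef
        have hDtop : D = ⊤ := by
          by_contra hDne
          obtain ⟨N'', hN''max, hDN⟩ := Ideal.exists_le_maximal D hDne
          by_cases hNM : N'' = M
          · subst hNM
            obtain ⟨⟨r, s⟩, hrs⟩ := IsLocalization.surj N''.primeCompl v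
            have hsD : (s : R) ∈ D := by
              show u * algebraMap R (FractionRing R) (s : R) ∈
                (1 : FractionalIdeal R⁰ (FractionRing R))
              have h3 := congrArg (algebraMap (Localization.AtPrime N'') (FractionRing R)) hrs
              rw [map_mul, ← IsScalarTower.algebraMap_apply R (Localization.AtPrime N'')
                  (FractionRing R), ← IsScalarTower.algebraMap_apply R (Localization.AtPrime N'')
                  (FractionRing R), hv] at h3
              rw [h3]
              exact (FractionalIdeal.mem_one_iff _).mpr ⟨r, rfl⟩
            exact s.2 (hDN hsD)
          · have hex : ∃ m ∈ M, m ∉ N'' := by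
              by_contra hc
              push_neg at hc
              exact hNM (hM.eq_of_le hN''max.ne_top hc).symm
            obtain ⟨m, hmM, hmN⟩ := hex
            exact hmN (hDN (huM m hmM))
        have h1D : (1 : R) ∈ D := hDtop ▸ Submodule.mem_top
        have h2 : u * algebraMap R (FractionRing R) 1 ∈
            (1 : FractionalIdeal R⁰ (FractionRing R)) := h1D
        rwa [map_one, mul_one] at h2
      have hMnotdiv : ¬ Divisorial R M := by
        intro hDivM
        have hDivM' : divClos R M = (M : FractionalIdeal R⁰ (FractionRing R)) := hDivM
        have hone : divClos R M = 1 := by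
          unfold divClos
          rw [h1M, FractionalIdeal.div_one]
        rw [hone] at hDivM'
        have hMtop : (⊤ : Ideal R) = M := FractionalIdeal.coeIdeal_injective
          (K := FractionRing R) (by
            show ((⊤ : Ideal R) : FractionalIdeal R⁰ (FractionRing R)) =
              ((M : Ideal R) : FractionalIdeal R⁰ (FractionRing R))
            rw [FractionalIdeal.coeIdeal_top]; exact hDivM')
        exact hM.ne_top hMtop.symm
      have hmem : M ∈ MSet R I := ⟨hM, hIM, hMnotdiv, hnd⟩
      rw [hMSet] at hmem
      exact hmem
    · apply hnd
      show Divisorial (Localization.AtPrime M) (MapAt R M hM.isPrime I)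
      have htop : (MapAt R M hM.isPrime I : Ideal (Localization.AtPrime M)) = ⊤ := by
        obtain ⟨a, haI, haM⟩ := SetLike.not_le_iff_exists.mp hIM
        exact Ideal.eq_top_of_isUnit_mem _ (Ideal.mem_map_of_mem _ haI)
          (IsLocalization.map_units (Localization.AtPrime M) (⟨a, haM⟩ : M.primeCompl))
      rw [htop]
      letI : Algebra (Localization.AtPrime M) (FractionRing (Localization.AtPrime M)) :=
        OreLocalization.instAlgebra
      show divClos (Localization.AtPrime M) ⊤ =
        ((⊤ : Ideal (Localization.AtPrime M)) :
          FractionalIdeal (Localization.AtPrime M)⁰ (FractionRing (Localization.AtPrime M)))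
      unfold divClos
      rw [FractionalIdeal.coeIdeal_top, FractionalIdeal.div_one, FractionalIdeal.div_one]
  · intro hloc
    obtain ⟨S, hSeq, hfac, _⟩ := hS I hI
    have hMempty : MSet R I = ∅ := by
      rw [Set.eq_empty_iff_forall_notMem]
      rintro M ⟨hMmax, hIM, hMnd, hMndA⟩
      exact hMndA (hloc M hMmax)
    have hSempty : S = ∅ := Finset.coe_eq_empty.mp (hSeq.trans hMempty)
    rw [hSempty, Finset.prod_empty, mul_one] at hfac
    exact hfac.symm
end
end
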